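/- arXiv:2602.01214 — 7 statements merged into one kernel-verified Lean document; each statement's English description precedes it below -/
import Mathlib

section
/- The subspaces Im d, ker d ∩ ker d*, and the closure of Im d* are pairwise orthogonal, and H is their internal direct sum: every x ∈ H can be written (uniquely) as x = u + v + w with u ∈ Im d, v ∈ ker d ∩ ker d*, and w in the closure of Im d*. (Hodge decomposition for the Laplacian □ = d∘d* + d*∘d.) -/
open scoped InnerProductSpace InnerProduct
open Submodule

/-!
Since `d ∘ d = 0`, `Im d ⊆ ker d`. The identities `(Im d)ᗮ = ker d*` and `(ker d)ᗮ = cl (Im d*)`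
give `H = ker d ⊕ cl (Im d*)`, and, `Im d` being closed, `ker d = Im d ⊕ (ker d ∩ (Im d)ᗮ)` with
`ker d ∩ (Im d)ᗮ = ker d ∩ ker d*`. The three summands are pairwise orthogonal, so the
decomposition is unique.
-/

namespace Submodule.IsOrtho

variable {𝕜 E : Type*} [RCLike 𝕜] [NormedAddCommGroup E] [InnerProductSpace 𝕜 E]
  {U V W : Submodule 𝕜 E}

theorem eq_of_add_eq_add (hUV : U ⟂ V) {u u' v v' : E} (hu : u ∈ U) (hu' : u' ∈ U)
    (hv : v ∈ V) (hv' : v' ∈ V) (h : u + v = u' + v') : u = u' ∧ v = v' := by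
  have hsub : u - u' = v' - v := by rw [sub_eq_sub_iff_add_eq_add, h, add_comm]
  have hzero : u - u' = 0 :=
    disjoint_def.1 hUV.disjoint _ (sub_mem hu hu') (hsub ▸ sub_mem hv' hv)
  refine ⟨sub_eq_zero.1 hzero, (sub_eq_zero.1 ?_).symm⟩
  rw [← hsub, hzero]

theorem eq_of_add_add_eq_add_add (hUV : U ⟂ V) (hUW : U ⟂ W) (hVW : V ⟂ W)
    {u u' v v' w w' : E} (hu : u ∈ U) (hu' : u' ∈ U) (hv : v ∈ V) (hv' : v' ∈ V)
    (hw : w ∈ W) (hw' : w' ∈ W) (h : u + v + w = u' + v' + w') :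
    u = u' ∧ v = v' ∧ w = w' := by
  rw [add_assoc, add_assoc] at h
  obtain ⟨rfl, hvw⟩ := (isOrtho_sup_right.2 ⟨hUV, hUW⟩).eq_of_add_eq_add hu hu'
    (add_mem_sup hv hw) (add_mem_sup hv' hw') h
  exact ⟨rfl, hVW.eq_of_add_eq_add hv hv' hw hw' hvw⟩

end Submodule.IsOrtho

theorem LinearMap.range_le_ker_of_apply_apply_eq_zero {R M : Type*} [Semiring R]
    [AddCommMonoid M] [Module R M] (f : M →ₗ[R] M) (hf : ∀ x, f (f x) = 0) :
    range f ≤ ker f := by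
  rintro _ ⟨x, rfl⟩
  exact hf x

namespace ContinuousLinearMap

variable {𝕜 E : Type*} [RCLike 𝕜] [NormedAddCommGroup E] [InnerProductSpace 𝕜 E]
  [CompleteSpace E] (d : E →L[𝕜] E)

theorem isOrtho_range_ker_inf_ker_adjoint :
    LinearMap.range (d : E →ₗ[𝕜] E) ⟂
      LinearMap.ker (d : E →ₗ[𝕜] E) ⊓ LinearMap.ker (d† : E →ₗ[𝕜] E) := by
  rw [← orthogonal_range]
  exact (isOrtho_orthogonal_right _).mono_right inf_le_right

theorem isOrtho_ker_closure_range_adjoint :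
    LinearMap.ker (d : E →ₗ[𝕜] E) ⟂
      (LinearMap.range (d† : E →ₗ[𝕜] E)).topologicalClosure := by
  rw [← orthogonal_ker]
  exact isOrtho_orthogonal_right _

theorem exists_range_add_ker_inf_ker_adjoint_add_closure_range_adjoint
    (hd2 : ∀ x, d (d x) = 0) (hclosed : IsClosed (LinearMap.range (d : E →ₗ[𝕜] E) : Set E))
    (x : E) :
    ∃ u ∈ LinearMap.range (d : E →ₗ[𝕜] E),
      ∃ v ∈ LinearMap.ker (d : E →ₗ[𝕜] E) ⊓ LinearMap.ker (d† : E →ₗ[𝕜] E),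
      ∃ w ∈ (LinearMap.range (d† : E →ₗ[𝕜] E)).topologicalClosure, x = u + v + w := by
  have : CompleteSpace (LinearMap.range (d : E →ₗ[𝕜] E)) := hclosed.completeSpace_coe
  have : CompleteSpace (LinearMap.ker (d : E →ₗ[𝕜] E)) := d.isClosed_ker.completeSpace_coe
  obtain ⟨p, hp, w, hw, rfl⟩ := (LinearMap.ker (d : E →ₗ[𝕜] E)).exists_add_mem_mem_orthogonal x
  obtain ⟨u, hu, v, hv, rfl⟩ := (LinearMap.range (d : E →ₗ[𝕜] E)).exists_add_mem_mem_orthogonal p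
  have hv_ker : v ∈ LinearMap.ker (d : E →ₗ[𝕜] E) := by
    simpa using sub_mem hp (LinearMap.range_le_ker_of_apply_apply_eq_zero _ hd2 hu)
  rw [orthogonal_range] at hv
  rw [orthogonal_ker] at hw
  exact ⟨u, hu, v, ⟨hv_ker, hv⟩, w, hw, rfl⟩

end ContinuousLinearMap

/-- **Hodge decomposition** for the Laplacian `□ = d ∘ d* + d* ∘ d` associated with a
continuous linear map `d` on a real Hilbert space with `d ∘ d = 0` and closed range:
the subspaces `Im d`, `ker d ∩ ker d*`, and the closure of `Im d*` are pairwise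
orthogonal, and every `x` is uniquely the sum of elements of these three subspaces. -/
theorem hodge_decomposition_of_closed_range
    {H : Type*} [NormedAddCommGroup H] [InnerProductSpace ℝ H] [CompleteSpace H]
    (d : H →L[ℝ] H) (hd2 : ∀ x, d (d x) = 0)
    (hclosed : IsClosed (LinearMap.range (d : H →ₗ[ℝ] H) : Set H)) :
    (∀ u ∈ LinearMap.range (d : H →ₗ[ℝ] H),
      ∀ v ∈ LinearMap.ker (d : H →ₗ[ℝ] H) ⊓ LinearMap.ker (ContinuousLinearMap.adjoint d : H →ₗ[ℝ] H),
        ⟪u, v⟫_ℝ = 0) ∧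
    (∀ u ∈ LinearMap.range (d : H →ₗ[ℝ] H),
      ∀ w ∈ (LinearMap.range (ContinuousLinearMap.adjoint d : H →ₗ[ℝ] H)).topologicalClosure,
        ⟪u, w⟫_ℝ = 0) ∧
    (∀ v ∈ LinearMap.ker (d : H →ₗ[ℝ] H) ⊓ LinearMap.ker (ContinuousLinearMap.adjoint d : H →ₗ[ℝ] H),
      ∀ w ∈ (LinearMap.range (ContinuousLinearMap.adjoint d : H →ₗ[ℝ] H)).topologicalClosure,
        ⟪v, w⟫_ℝ = 0) ∧
    (∀ x : H, ∃! uvw : H × H × H,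
      uvw.1 ∈ LinearMap.range (d : H →ₗ[ℝ] H) ∧
      uvw.2.1 ∈ LinearMap.ker (d : H →ₗ[ℝ] H) ⊓ LinearMap.ker (ContinuousLinearMap.adjoint d : H →ₗ[ℝ] H) ∧
      uvw.2.2 ∈ (LinearMap.range (ContinuousLinearMap.adjoint d : H →ₗ[ℝ] H)).topologicalClosure ∧
      x = uvw.1 + uvw.2.1 + uvw.2.2) := by
  have hRK := d.isOrtho_range_ker_inf_ker_adjoint
  have hRC := (d.isOrtho_ker_closure_range_adjoint).mono_left
    (LinearMap.range_le_ker_of_apply_apply_eq_zero _ hd2)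
  have hKC := (d.isOrtho_ker_closure_range_adjoint).mono_left
    (inf_le_left (b := LinearMap.ker (d† : H →ₗ[ℝ] H)))
  refine ⟨isOrtho_iff_inner_eq.1 hRK, isOrtho_iff_inner_eq.1 hRC, isOrtho_iff_inner_eq.1 hKC,
    fun x => ?_⟩
  obtain ⟨u, hu, v, hv, w, hw, hx⟩ :=
    d.exists_range_add_ker_inf_ker_adjoint_add_closure_range_adjoint hd2 hclosed x
  refine ⟨(u, v, w), ⟨hu, hv, hw, hx⟩, ?_⟩
  rintro ⟨u', v', w'⟩ ⟨hu', hv', hw', hx'⟩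
  obtain ⟨rfl, rfl, rfl⟩ := hRK.eq_of_add_add_eq_add_add hRC hKC hu' hu hv' hv hw' hw (hx' ▸ hx)
  rfl
end

section
/- For every r ≥ 2, p, k ∈ ℤ and α ∈ H_{p,k−p}, one has α ∈ Z_r^{p,k} if and only if: (i) α = d_0 β + Π_0 α for some β ∈ H_{p,k−p−1}, and (ii) there exist harmonic elements ω̄_{p+i} ∈ ker d_0 ∩ ker d_0* ∩ H_{p+i,k−p−i} for i = 1, …, r−2 such that for each i = 1, …, r−1 one has d_c^i(Π_0 α) = ∑_{j=1}^{i−1} d_c^{i−j}(ω̄_{p+j}) (for i = 1 the empty sum gives d_c^1(Π_0 α) = 0). -/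
open scoped InnerProductSpace

/-- `α ∈ Z_r^{p,k}` for the spectral sequence of a multicomplex of Hilbert spaces. -/
def MemZ {H : Type*} [NormedAddCommGroup H] [InnerProductSpace ℝ H]
    (Hgr : ℤ × ℤ → Submodule ℝ H) (D : ℕ → H →L[ℝ] H)
    (r : ℕ) (p k : ℤ) (α : H) : Prop :=
  α ∈ Hgr (p, k - p) ∧ D 0 α = 0 ∧
    ∃ z : ℕ → H,
      (∀ j : ℕ, 1 ≤ j → j ≤ r - 1 → z j ∈ Hgr (p + (j : ℤ), k - p - (j : ℤ))) ∧
      (∀ n : ℕ, 1 ≤ n → n ≤ r - 1 → D n α = ∑ i ∈ Finset.range n, D i (z (n - i)))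

/-!
Write a sequence `(xₙ)` as the formal series `x = ∑ xₙ tⁿ` and the multicomplex as the operator
series `𝔇 = ∑ dᵢ tⁱ`, so that `𝔇² = 0` and `α ∈ Z_r^{p,k}` says that `α` is the constant term
of a series `x` with `𝔇 x ≡ 0 mod tʳ`. Put `𝔇₊ = 𝔇 - d₀` and `U = 1 + 𝔇₊ g`, which has constant
term `1` and so is invertible and injective modulo `tʳ`. The recursion defining `∂` says
`U ∂ = 𝔇₊`, and `𝔇² = 0` gives the conjugation identity `𝔇 U = U d₀ + 𝔇₊ Π₀`.

If `𝔇 x ≡ 0`, then applying `U` shows `∂ α ≡ d₀ W + ∂ Π₀ W` for `W = U⁻¹ (α - x)`, and projecting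
with `Π₀` gives the relations `d_c α ≡ d_c (Π₀ W)` with harmonic `ω = Π₀ W`. Conversely, if
`Π₀ ∂ u ≡ 0` for a series `u` of `d₀`-closed terms, the same identity gives `U d₀ ∂ u ≡ 0`,
hence `d₀ ∂ u ≡ 0`, and then `𝔇 (u - g ∂ u) ≡ 0`. The bigrading is carried along because `U`
preserves it.
-/

open PowerSeries Finset
open Set (EqOn)

noncomputable section

namespace Multicomplex

theorem sum_antidiagonal_eq_sum_Ico {M : Type*} [AddCommMonoid M] {f : ℕ → ℕ → M}
    (h₁ : ∀ j, f 0 j = 0) (h₂ : ∀ i, f i 0 = 0) (n : ℕ) :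
    ∑ p ∈ antidiagonal n, f p.1 p.2 = ∑ j ∈ Ico 1 n, f (n - j) j := by
  rw [← Nat.sum_antidiagonal_swap]
  simp only [Prod.fst_swap, Prod.snd_swap]
  rw [Nat.sum_antidiagonal_eq_sum_range_succ (fun j i => f i j)]
  refine (sum_subset (fun j hj => ?_) fun j hj hj' => ?_).symm
  · simp only [mem_Ico, mem_range] at hj ⊢
    omega
  · simp only [mem_Ico, mem_range, not_and, not_lt] at hj hj'
    rcases Nat.eq_zero_or_pos j with rfl | hj0
    · exact h₂ _
    · rw [show n - j = 0 by have := hj' hj0; omega, h₁]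

section Act

variable {R M : Type*}

section Semiring

variable [Semiring R] [AddCommMonoid M] [Module R M]

/-- Reading `x` as the series `∑ xₙ tⁿ`, this is the product `A x`. -/
def act (A : R⟦X⟧) (x : ℕ → M) (n : ℕ) : M :=
  ∑ p ∈ antidiagonal n, coeff p.1 A • x p.2

theorem act_apply_zero (A : R⟦X⟧) (x : ℕ → M) : act A x 0 = constantCoeff A • x 0 := by
  simp [act]

theorem act_eq_sum_range_add (A : R⟦X⟧) (x : ℕ → M) (n : ℕ) :
    act A x n = ∑ i ∈ range n, coeff i A • x (n - i) + coeff n A • x 0 := by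
  rw [act, Nat.sum_antidiagonal_eq_sum_range_succ (fun i j => coeff i A • x j), sum_range_succ,
    Nat.sub_self]

theorem act_eq_sum_Ico {A : R⟦X⟧} (hA : constantCoeff A = 0) {x : ℕ → M} (hx : x 0 = 0)
    (n : ℕ) : act A x n = ∑ j ∈ Ico 1 n, coeff (n - j) A • x j :=
  sum_antidiagonal_eq_sum_Ico (f := fun i j => coeff i A • x j) (by simp [hA]) (by simp [hx]) n

theorem zero_act (x : ℕ → M) : act (0 : R⟦X⟧) x = 0 := by
  ext n
  simp [act]

theorem act_zero (A : R⟦X⟧) : act A (0 : ℕ → M) = 0 := by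
  ext n
  simp [act]

theorem add_act (A B : R⟦X⟧) (x : ℕ → M) : act (A + B) x = act A x + act B x := by
  ext n
  simp [act, add_smul, sum_add_distrib]

theorem act_add (A : R⟦X⟧) (x y : ℕ → M) : act A (x + y) = act A x + act A y := by
  ext n
  simp [act, sum_add_distrib]

theorem one_act (x : ℕ → M) : act (1 : R⟦X⟧) x = x := by
  ext n
  rw [act, sum_eq_single (0, n)] <;> aesop (add simp coeff_one)

theorem C_act (a : R) (x : ℕ → M) : act (C a) x = a • x := by
  ext n
  rw [act, sum_eq_single (0, n)] <;> aesop (add simp coeff_C)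

theorem act_single (A : R⟦X⟧) (a : M) (n : ℕ) : act A (Pi.single 0 a) n = coeff n A • a := by
  rw [act, sum_eq_single (n, 0)] <;> aesop (add simp Pi.single_apply)

theorem mul_act (A B : R⟦X⟧) (x : ℕ → M) : act (A * B) x = act A (act B x) := by
  ext n
  classical
  simp only [act, coeff_mul, sum_smul, smul_sum, mul_smul, sum_sigma']
  apply sum_nbij' (fun ⟨⟨_i, j⟩, ⟨k, l⟩⟩ ↦ ⟨(k, l + j), (l, j)⟩)
    (fun ⟨⟨i, _j⟩, ⟨k, l⟩⟩ ↦ ⟨(i + k, l), (i, k)⟩) <;> aesop (add simp [add_assoc])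

theorem act_eqOn_act {A : R⟦X⟧} {x y : ℕ → M} {r : ℕ} (h : EqOn x y (Set.Iio r)) :
    EqOn (act A x) (act A y) (Set.Iio r) := by
  intro n hn
  refine sum_congr rfl fun p hp => ?_
  rw [h (show p.2 < r by rw [HasAntidiagonal.mem_antidiagonal] at hp; simp at hn; omega)]

theorem act_mem {S : Type*} [SetLike S M] [AddSubmonoidClass S M] {F G : ℕ → S} {A : R⟦X⟧}
    (hA : ∀ i j, ∀ v ∈ F j, coeff i A • v ∈ G (i + j)) {x : ℕ → M} {r : ℕ}
    (hx : ∀ n < r, x n ∈ F n) : ∀ n < r, act A x n ∈ G n := by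
  intro n hn
  refine sum_mem fun p hp => ?_
  rw [← HasAntidiagonal.mem_antidiagonal.1 hp]
  exact hA _ _ _ (hx _ (by rw [HasAntidiagonal.mem_antidiagonal] at hp; omega))

end Semiring

section Ring

variable [Ring R] [AddCommGroup M] [Module R M]

theorem sub_act (A B : R⟦X⟧) (x : ℕ → M) : act (A - B) x = act A x - act B x := by
  ext n
  simp [act, sub_smul, sum_sub_distrib]

theorem act_sub (A : R⟦X⟧) (x y : ℕ → M) : act A (x - y) = act A x - act A y := by
  ext n
  simp [act, smul_sub, sum_sub_distrib]

/-- Since `A` has no constant term, `wₙ = yₙ - (A w)ₙ` only involves `w₀, …, wₙ₋₁`. -/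
theorem mem_of_act_one_add_eqOn {S : Type*} [SetLike S M] [AddSubgroupClass S M] {F : ℕ → S}
    {A : R⟦X⟧} (hA₀ : constantCoeff A = 0) (hA : ∀ i j, ∀ v ∈ F j, coeff i A • v ∈ F (i + j))
    {w y : ℕ → M} {r : ℕ} (hw : EqOn (act (1 + A) w) y (Set.Iio r)) (hy : ∀ n < r, y n ∈ F n) :
    ∀ n < r, w n ∈ F n := by
  intro n
  induction n using Nat.strong_induction_on with
  | _ n ih =>
  intro hn
  have hwn : w n = y n - act A w n := by
    rw [← hw hn, add_act, one_act, Pi.add_apply, add_sub_cancel_right]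
  rw [hwn]
  refine sub_mem (hy n hn) (sum_mem fun p hp => ?_)
  obtain ⟨i, j⟩ := p
  rw [HasAntidiagonal.mem_antidiagonal] at hp
  rw [← hp]
  rcases Nat.eq_zero_or_pos i with rfl | hi
  · simp [coeff_zero_eq_constantCoeff_apply, hA₀, zero_mem]
  · exact hA _ _ _ (ih j (by omega) (by omega))

theorem eqOn_zero_of_act_one_add_eqOn_zero {A : R⟦X⟧} (hA₀ : constantCoeff A = 0)
    {w : ℕ → M} {r : ℕ} (hw : EqOn (act (1 + A) w) 0 (Set.Iio r)) : EqOn w 0 (Set.Iio r) := by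
  have := mem_of_act_one_add_eqOn (F := fun _ => (⊥ : AddSubgroup M)) hA₀ (by simp) hw (by simp)
  exact fun n hn => by simpa using this n hn

end Ring

end Act

section Core

variable {R M : Type*} [Ring R] [AddCommGroup M] [Module R M]

def harmonicProj (d g : R) : R := 1 - g * d - d * g

variable {d g : R}

theorem harmonicProj_mul (hd : d * d = 0) (hdgd : d * g * d = d) : harmonicProj d g * d = 0 := by
  rw [harmonicProj, sub_mul, sub_mul, mul_assoc, hd, mul_zero, hdgd]
  noncomm_ring

theorem mul_harmonicProj (hd : d * d = 0) (hdgd : d * g * d = d) : d * harmonicProj d g = 0 := by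
  rw [harmonicProj, mul_sub, mul_sub, ← mul_assoc, ← mul_assoc, hd, zero_mul, hdgd]
  noncomm_ring

variable {D P : R⟦X⟧}

theorem mul_self_eq_zero_of_constantCoeff (hD : D * D = 0) (hd : constantCoeff D = d) :
    d * d = 0 := by
  simpa [hd] using congrArg constantCoeff hD

theorem constantCoeff_sub_C_mul_C (hd : constantCoeff D = d) :
    constantCoeff ((D - C d) * C g) = 0 := by
  simp [hd]

theorem mul_one_add_sub_C_mul_C (hD : D * D = 0) (hd : constantCoeff D = d) :
    D * (1 + (D - C d) * C g) = (1 + (D - C d) * C g) * C d + (D - C d) * C (harmonicProj d g) := by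
  have hd' : C d * C d = 0 := by rw [← map_mul, mul_self_eq_zero_of_constantCoeff hD hd, map_zero]
  rw [← sub_eq_zero, harmonicProj, map_sub, map_sub, map_mul, map_mul, map_one]
  calc _ = D * D * C g - C d * C d * C g := by noncomm_ring
    _ = 0 := by rw [hD, hd', zero_mul, sub_self]

theorem act_harmonicProj_mul_eqOn_zero_of_cycle (hD : D * D = 0) (hd : constantCoeff D = d)
    (hP : (1 + (D - C d) * C g) * P = D - C d) (hdgd : d * g * d = d) {x W : ℕ → M} {r : ℕ}
    (hx : EqOn (act D x) 0 (Set.Iio r))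
    (hW : EqOn (act (1 + (D - C d) * C g) W) (Pi.single 0 (x 0) - x) (Set.Iio r)) :
    EqOn (act (C (harmonicProj d g) * P) (Pi.single 0 (x 0) - act (C (harmonicProj d g)) W)) 0
      (Set.Iio r) := by
  have hE : EqOn (act P (Pi.single 0 (x 0)) - act (C d) W - act (P * C (harmonicProj d g)) W) 0
      (Set.Iio r) := by
    refine eqOn_zero_of_act_one_add_eqOn_zero (constantCoeff_sub_C_mul_C (g := g) hd) ?_
    have hUE : act (1 + (D - C d) * C g) (act P (Pi.single 0 (x 0)) - act (C d) W -
          act (P * C (harmonicProj d g)) W) =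
        act D (Pi.single 0 (x 0)) - act (C d) (Pi.single 0 (x 0)) -
          act D (act (1 + (D - C d) * C g) W) := by
      rw [act_sub, act_sub, ← mul_act, ← mul_act, ← mul_act, ← mul_act, ← mul_assoc, hP,
        mul_one_add_sub_C_mul_C hD hd, add_act, sub_act]
      abel
    intro n hn
    have hdx : d • x 0 = 0 := by
      simpa [act_apply_zero, hd] using hx (show 0 ∈ Set.Iio r from (Nat.zero_le n).trans_lt hn)
    rw [hUE, Pi.sub_apply, Pi.sub_apply, act_eqOn_act hW hn, act_sub, Pi.sub_apply, hx hn, C_act]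
    rcases n with _ | n <;> simp [hdx]
  intro n hn
  have hπd : C (harmonicProj d g) * C d = 0 := by
    rw [← map_mul, harmonicProj_mul (mul_self_eq_zero_of_constantCoeff hD hd) hdgd, map_zero]
  have := act_eqOn_act (A := C (harmonicProj d g)) hE hn
  simp only [act_sub, ← mul_act, ← mul_assoc, hπd, zero_act, act_zero, sub_zero] at this ⊢
  exact this

theorem cycle_of_act_harmonicProj_mul_eqOn_zero (hD : D * D = 0) (hd : constantCoeff D = d)
    (hP : (1 + (D - C d) * C g) * P = D - C d) {u : ℕ → M} {r : ℕ} (hu : d • u = 0)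
    (hπ : EqOn (act (C (harmonicProj d g) * P) u) 0 (Set.Iio r)) :
    EqOn (act D (u - act (C g * P) u)) 0 (Set.Iio r) := by
  have hdu : act (C d) u = 0 := by rw [C_act, hu]
  have hdP : EqOn (act (C d * P) u) 0 (Set.Iio r) := by
    refine eqOn_zero_of_act_one_add_eqOn_zero (constantCoeff_sub_C_mul_C (g := g) hd) ?_
    have hUdP : (1 + (D - C d) * C g) * (C d * P) =
        D * D - D * C d - (D - C d) * (C (harmonicProj d g) * P) := by
      rw [← mul_assoc, eq_sub_of_add_eq (mul_one_add_sub_C_mul_C hD hd).symm, sub_mul, mul_assoc,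
        hP, mul_assoc]
      noncomm_ring
    intro n hn
    rw [← mul_act, hUdP, sub_act, sub_act, hD, mul_act, hdu, mul_act, Pi.sub_apply,
      act_eqOn_act hπ hn]
    simp [zero_act, act_zero]
  have hDU : D * (1 - C g * P) = C d + C (harmonicProj d g) * P + C g * (C d * P) := by
    rw [← sub_eq_zero, harmonicProj, map_sub, map_sub, map_mul, map_mul, map_one]
    calc _ = (D - C d) - (1 + (D - C d) * C g) * P := by noncomm_ring
      _ = 0 := by rw [hP, sub_self]
  intro n hn
  rw [show u - act (C g * P) u = act (1 - C g * P) u by rw [sub_act, one_act], ← mul_act, hDU,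
    add_act, add_act, hdu, mul_act (C g), Pi.add_apply, Pi.add_apply, hπ hn, act_eqOn_act hdP hn]
  simp [act_zero]

end Core

section Graded

variable {R M S : Type*} [Ring R] [AddCommGroup M] [Module R M] [SetLike S M]

def MapsGraded (Hgr : ℤ × ℤ → S) (e : ℤ) (A : R⟦X⟧) : Prop :=
  ∀ (i : ℕ) (a b : ℤ), ∀ v ∈ Hgr (a, b), coeff i A • v ∈ Hgr (a + i, b + e - i)

variable {Hgr : ℤ × ℤ → S} {e f : ℤ} {A B : R⟦X⟧} {p q : ℤ} {r : ℕ}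

theorem MapsGraded.coeff_smul_mem (hA : MapsGraded Hgr e A) (i j : ℕ) {v : M}
    (hv : v ∈ Hgr (p + j, q - j)) : coeff i A • v ∈ Hgr (p + ↑(i + j), q + e - ↑(i + j)) := by
  convert hA i _ _ v hv using 3 <;> push_cast <;> ring

variable [AddSubgroupClass S M]

theorem MapsGraded.act_mem (hA : MapsGraded Hgr e A) {x : ℕ → M}
    (hx : ∀ n < r, x n ∈ Hgr (p + n, q - n)) : ∀ n < r, act A x n ∈ Hgr (p + n, q + e - n) :=
  Multicomplex.act_mem (fun i j _ hv => hA.coeff_smul_mem i j hv) hx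

theorem MapsGraded.mem_of_act_one_add_eqOn (hA₀ : constantCoeff A = 0)
    (hA : MapsGraded Hgr 0 A) {w y : ℕ → M} (hw : EqOn (act (1 + A) w) y (Set.Iio r))
    (hy : ∀ n < r, y n ∈ Hgr (p + n, q - n)) : ∀ n < r, w n ∈ Hgr (p + n, q - n) :=
  Multicomplex.mem_of_act_one_add_eqOn (F := fun n => Hgr (p + n, q - n)) hA₀
    (fun i j _ hv => by simpa using hA.coeff_smul_mem i j hv) hw hy

theorem single_mem {v : M} (hv : v ∈ Hgr (p, q)) :
    ∀ n : ℕ, (Pi.single 0 v : ℕ → M) n ∈ Hgr (p + n, q - n)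
  | 0 => by simpa using hv
  | n + 1 => by simp [zero_mem]

theorem MapsGraded.sub (hA : MapsGraded Hgr e A) (hB : MapsGraded Hgr e B) :
    MapsGraded Hgr e (A - B) := fun i a b v hv => by
  simpa [sub_smul] using sub_mem (hA i a b v hv) (hB i a b v hv)

theorem MapsGraded.mul (hA : MapsGraded Hgr e A) (hB : MapsGraded Hgr f B) :
    MapsGraded Hgr (e + f) (A * B) := by
  intro n a b v hv
  rw [coeff_mul, sum_smul]
  refine sum_mem fun ⟨i, j⟩ hij => ?_
  rw [HasAntidiagonal.mem_antidiagonal] at hij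
  subst hij
  rw [mul_smul]
  convert hA i _ _ _ (hB j a b v hv) using 3 <;> push_cast <;> ring

theorem mapsGraded_one : MapsGraded Hgr 0 (1 : R⟦X⟧) := by
  intro i a b v hv
  rcases eq_or_ne i 0 with rfl | hi
  · simpa using hv
  · simp [coeff_one, hi, zero_mem]

theorem mapsGraded_C {c : R} (hc : ∀ a b, ∀ v ∈ Hgr (a, b), c • v ∈ Hgr (a, b + e)) :
    MapsGraded Hgr e (C c) := by
  intro i a b v hv
  rcases eq_or_ne i 0 with rfl | hi
  · simpa using hc a b v hv
  · simp [coeff_C, hi, zero_mem]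

theorem MapsGraded.C_of_constantCoeff_eq (hA : MapsGraded Hgr e A) {c : R}
    (hc : constantCoeff A = c) : MapsGraded Hgr e (C c) :=
  mapsGraded_C fun a b v hv => by simpa [hc] using hA 0 a b v hv

variable {d g : R} {D P : R⟦X⟧}

theorem mapsGraded_C_harmonicProj (hd : MapsGraded Hgr 1 (C d))
    (hg : MapsGraded Hgr (-1) (C g)) : MapsGraded Hgr 0 (C (harmonicProj d g)) := by
  rw [harmonicProj, map_sub, map_sub, map_one, map_mul, map_mul]
  simpa using (mapsGraded_one.sub (hg.mul hd)).sub (hd.mul hg)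

theorem mapsGraded_sub_C_mul_C (hD : MapsGraded Hgr 1 D) (hd : constantCoeff D = d)
    (hg : MapsGraded Hgr (-1) (C g)) : MapsGraded Hgr 0 ((D - C d) * C g) := by
  simpa using (hD.sub (hD.C_of_constantCoeff_eq hd)).mul hg

theorem MapsGraded.of_one_add_mul (hA₀ : constantCoeff A = 0) (hA : MapsGraded Hgr 0 A)
    (hB : MapsGraded Hgr e B) (h : (1 + A) * P = B) : MapsGraded Hgr e P := by
  intro i a b v hv
  have := hA.mem_of_act_one_add_eqOn (r := i + 1) (q := b + e) hA₀ (w := act P (Pi.single 0 v))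
    (by rw [← mul_act, h]; exact fun _ _ => rfl)
    (fun n _ => by rw [act_single]; simpa [add_sub_right_comm] using hB n a b v hv) i i.lt_succ_self
  rw [act_single] at this
  convert this using 3

theorem exists_harmonicProj_eqOn_zero_of_cycle (hD : D * D = 0) (hd : constantCoeff D = d)
    (hP : (1 + (D - C d) * C g) * P = D - C d) (hdgd : d * g * d = d)
    (hDgr : MapsGraded Hgr 1 D) (hg : MapsGraded Hgr (-1) (C g)) {x : ℕ → M} (hx₀ : d • x 0 = 0)
    (hxgr : ∀ n < r, x n ∈ Hgr (p + n, q - n)) (hx : EqOn (act D x) 0 (Set.Iio r)) :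
    ∃ W : ℕ → M, W 0 = 0 ∧ (∀ n < r, W n ∈ Hgr (p + n, q - n)) ∧
      EqOn (act (C (harmonicProj d g) * P)
        (Pi.single 0 (harmonicProj d g • x 0) - harmonicProj d g • W)) 0 (Set.Iio r) := by
  -- `x - 𝔇 (g x₀)` is again a cycle, and its constant term is `Π₀ x₀`
  set x' := x - act D (Pi.single 0 (g • x 0))
  have hx'₀ : x' 0 = harmonicProj d g • x 0 := by
    simp [x', act_single, hd, harmonicProj, sub_smul, mul_smul, hx₀]
  have hx'gr : ∀ n < r, x' n ∈ Hgr (p + n, q - n) := by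
    intro n hn
    have hx0 : x 0 ∈ Hgr (p, q) := by simpa using hxgr 0 (by omega)
    have hgx : g • x 0 ∈ Hgr (p, q - 1) := by simpa [sub_eq_add_neg] using hg 0 p q _ hx0
    have := hDgr.act_mem (fun n _ => single_mem hgx n) n hn
    rw [sub_add_cancel] at this
    exact sub_mem (hxgr n hn) this
  have hx' : EqOn (act D x') 0 (Set.Iio r) := by
    rw [act_sub, ← mul_act, hD, zero_act, sub_zero]
    exact hx
  have hU : constantCoeff (1 + (D - C d) * C g) = ((1 : Rˣ) : R) := by simp [hd]
  set W := act (invOfUnit (1 + (D - C d) * C g) 1) (Pi.single 0 (x' 0) - x')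
  have hUW : act (1 + (D - C d) * C g) W = Pi.single 0 (x' 0) - x' := by
    rw [← mul_act, mul_invOfUnit _ _ hU, one_act]
  refine ⟨W, by simp [W, act_apply_zero], ?_, ?_⟩
  · refine (mapsGraded_sub_C_mul_C hDgr hd hg).mem_of_act_one_add_eqOn
      (constantCoeff_sub_C_mul_C hd) (fun n _ => congrFun hUW n) fun n hn => ?_
    have hx'0 : x' 0 ∈ Hgr (p, q) := by simpa using hx'gr 0 (by omega)
    exact sub_mem (single_mem hx'0 n) (hx'gr n hn)
  · have := act_harmonicProj_mul_eqOn_zero_of_cycle hD hd hP hdgd hx' (fun n _ => congrFun hUW n)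
    rwa [hx'₀, C_act] at this

theorem exists_cycle_of_eqOn_zero (hD : D * D = 0) (hd : constantCoeff D = d)
    (hP : (1 + (D - C d) * C g) * P = D - C d) (hDgr : MapsGraded Hgr 1 D)
    (hg : MapsGraded Hgr (-1) (C g)) {u : ℕ → M} (hu₀ : d • u = 0)
    (hugr : ∀ n < r, u n ∈ Hgr (p + n, q - n))
    (hu : EqOn (act (C (harmonicProj d g) * P) u) 0 (Set.Iio r)) {β : M}
    (hβ : β ∈ Hgr (p, q - 1)) :
    ∃ x : ℕ → M, x 0 = u 0 + d • β ∧ (∀ n < r, x n ∈ Hgr (p + n, q - n)) ∧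
      EqOn (act D x) 0 (Set.Iio r) := by
  have hP₀ : constantCoeff P = 0 := by simpa [hd] using congrArg constantCoeff hP
  have hPgr : MapsGraded Hgr 0 (C g * P) :=
    hg.mul ((mapsGraded_sub_C_mul_C hDgr hd hg).of_one_add_mul (constantCoeff_sub_C_mul_C hd)
      (hDgr.sub (hDgr.C_of_constantCoeff_eq hd)) hP)
  refine ⟨u - act (C g * P) u + act D (Pi.single 0 β), ?_, fun n hn => ?_, ?_⟩
  · simp [act_apply_zero, hd, hP₀]
  · have hβ' := hDgr.act_mem (fun n _ => single_mem hβ n) n hn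
    rw [sub_add_cancel] at hβ'
    exact add_mem (sub_mem (hugr n hn) (by simpa using hPgr.act_mem hugr n hn)) hβ'
  · rw [act_add, ← mul_act, hD, zero_act, add_zero]
    exact cycle_of_act_harmonicProj_mul_eqOn_zero hD hd hP hu₀ hu

theorem exists_cycle_of_harmonic (hD : D * D = 0) (hd : constantCoeff D = d)
    (hP : (1 + (D - C d) * C g) * P = D - C d) (hdgd : d * g * d = d)
    (hDgr : MapsGraded Hgr 1 D) (hg : MapsGraded Hgr (-1) (C g)) {a : M} (ha₀ : d • a = 0)
    (ha : a ∈ Hgr (p, q)) {ω : ℕ → M}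
    (hω : ∀ i, 1 ≤ i → i ≤ r - 2 → d • ω i = 0 ∧ ω i ∈ Hgr (p + i, q - i))
    (h : EqOn (act (C (harmonicProj d g) * P)
      (Pi.single 0 (harmonicProj d g • a) - (Set.Icc 1 (r - 2)).indicator ω)) 0 (Set.Iio r)) :
    ∃ x : ℕ → M, x 0 = a ∧ (∀ n < r, x n ∈ Hgr (p + n, q - n)) ∧
      EqOn (act D x) 0 (Set.Iio r) := by
  have hdd := mul_self_eq_zero_of_constantCoeff hD hd
  set u := Pi.single 0 (harmonicProj d g • a) - (Set.Icc 1 (r - 2)).indicator ω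
  have hu₀ : d • u = 0 := by
    ext (_ | n)
    · simp [u, ← mul_smul, mul_harmonicProj hdd hdgd]
    · by_cases hn : n + 1 ∈ Set.Icc 1 (r - 2)
      · simp [u, Set.indicator_of_mem hn, (hω _ hn.1 hn.2).1]
      · simp [u, Set.indicator_of_notMem hn]
  have hugr : ∀ n < r, u n ∈ Hgr (p + n, q - n) := by
    have hπgr := mapsGraded_C_harmonicProj (hDgr.C_of_constantCoeff_eq hd) hg
    rintro (_ | n) -
    · simpa [u] using hπgr 0 p q a ha
    · by_cases hn : n + 1 ∈ Set.Icc 1 (r - 2)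
      · simpa [u, Set.indicator_of_mem hn] using (hω _ hn.1 hn.2).2
      · simp [u, Set.indicator_of_notMem hn, zero_mem]
  have hga : g • a ∈ Hgr (p, q - 1) := by simpa [sub_eq_add_neg] using hg 0 p q a ha
  obtain ⟨x, hx₀, hxgr, hx⟩ := exists_cycle_of_eqOn_zero hD hd hP hDgr hg hu₀ hugr h hga
  refine ⟨x, ?_, hxgr, hx⟩
  simp [hx₀, u, harmonicProj, sub_smul, mul_smul, ha₀]

end Graded

section Decomposition

variable {R M S : Type*} [Ring R] [AddCommGroup M] [Module R M] [SetLike S M]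
  {Hgr : ℤ × ℤ → S} {d g : R}

theorem exists_eq_smul_add_harmonicProj_iff (hdd : d * d = 0) (hdgd : d * g * d = d)
    (hg : MapsGraded Hgr (-1) (C g)) {p q : ℤ} {a : M} (ha : a ∈ Hgr (p, q)) :
    (∃ β ∈ Hgr (p, q - 1), a = d • β + harmonicProj d g • a) ↔ d • a = 0 := by
  constructor
  · rintro ⟨β, -, hβ⟩
    rw [hβ, smul_add, ← mul_smul, ← mul_smul, hdd, mul_harmonicProj hdd hdgd, zero_smul,
      zero_smul, add_zero]
  · intro ha₀
    refine ⟨g • a, by simpa [sub_eq_add_neg] using hg 0 p q a ha, ?_⟩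
    simp [harmonicProj, sub_smul, mul_smul, ha₀]

end Decomposition

section Recursion

variable {R : Type*}

theorem mk_mul_mk_self_eq_zero [Semiring R] {D : ℕ → R}
    (h : ∀ n, ∑ i ∈ range (n + 1), D i * D (n - i) = 0) : mk D * mk D = 0 := by
  ext n
  rw [coeff_mul,
    Nat.sum_antidiagonal_eq_sum_range_succ (fun i j => coeff i (mk D) * coeff j (mk D))]
  simpa using h n

variable [Ring R] {D P : ℕ → R} {g : R}

theorem one_add_mul_mk_sub_C (hP1 : P 1 = D 1)
    (hPrec : ∀ r, 2 ≤ r → P r = D r - ∑ j ∈ Ico 1 r, D (r - j) * (g * P j)) :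
    (1 + (mk D - C (D 0)) * C g) * (mk P - C (P 0)) = mk D - C (D 0) := by
  ext n
  rcases Nat.lt_or_ge n 1 with hn | hn
  · obtain rfl : n = 0 := by omega
    simp
  have hsum : coeff n ((mk D - C (D 0)) * C g * (mk P - C (P 0))) =
      ∑ j ∈ Ico 1 n, D (n - j) * (g * P j) := by
    rw [coeff_mul, sum_antidiagonal_eq_sum_Ico
      (f := fun i j => coeff i ((mk D - C (D 0)) * C g) * coeff j (mk P - C (P 0))) (by simp)
      (by simp)]
    refine sum_congr rfl fun j hj => ?_
    simp only [mem_Ico] at hj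
    simp [coeff_C, mul_assoc, show n - j ≠ 0 by omega, show j ≠ 0 by omega]
  rw [add_mul, one_mul, map_add, hsum]
  rcases Nat.lt_or_ge n 2 with hn2 | hn2
  · obtain rfl : n = 1 := by omega
    simp [hP1]
  · simp [coeff_C, show n ≠ 0 by omega, hPrec n hn2]

theorem eqOn_act_C_mul_single_sub_iff {M : Type*} [AddCommGroup M] [Module R M] {c : R}
    {a : M} {ω ω' : ℕ → M} {r : ℕ} (hω' : ∀ j, 1 ≤ j → j ≤ r - 2 → ω' j = ω j)
    (hω'₀ : ω' 0 = 0) :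
    EqOn (act (C c * (mk P - C (P 0))) (Pi.single 0 a - ω')) 0 (Set.Iio r) ↔
      ∀ i, 1 ≤ i → i ≤ r - 1 → (c * P i) • a = ∑ j ∈ Ico 1 i, (c * P (i - j)) • ω j := by
  have h₀ : constantCoeff (C c * (mk P - C (P 0))) = 0 := by simp
  have hcoeff : ∀ i ≠ 0, coeff i (C c * (mk P - C (P 0))) = c * P i := fun i hi => by
    simp [coeff_C, hi]
  have happly : ∀ i, 1 ≤ i → i < r → (act (C c * (mk P - C (P 0))) (Pi.single 0 a - ω') i = 0 ↔
      (c * P i) • a = ∑ j ∈ Ico 1 i, (c * P (i - j)) • ω j) := by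
    intro i hi1 hi2
    rw [act_sub, Pi.sub_apply, act_single, act_eq_sum_Ico h₀ hω'₀, sub_eq_zero, hcoeff i (by omega)]
    refine Eq.congr_right (sum_congr rfl fun j hj => ?_)
    simp only [mem_Ico] at hj
    rw [hcoeff _ (by omega), hω' j hj.1 (by omega)]
  constructor
  · exact fun h i hi1 hi2 => (happly i hi1 (by omega)).1 (h (show i < r by omega))
  · intro h i hi
    rcases Nat.eq_zero_or_pos i with rfl | hi0
    · simp [act_apply_zero, h₀]
    · exact (happly i hi0 hi).2 (h i hi0 (by simp at hi; omega))

end Recursion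

section Hilbert

variable {H : Type*} [NormedAddCommGroup H] [InnerProductSpace ℝ H]

theorem mul_mul_self_eq_of_sub_mem_orthogonal {T g : H →L[ℝ] H}
    (h : ∀ x, x - T (g x) ∈ (LinearMap.range (T : H →ₗ[ℝ] H))ᗮ) : T * g * T = T := by
  ext x
  have hmem : T x - T (g (T x)) ∈ LinearMap.range (T : H →ₗ[ℝ] H) := ⟨x - g (T x), by simp⟩
  exact (sub_eq_zero.1 (Submodule.disjoint_def.1 (Submodule.orthogonal_disjoint _) _ hmem
    (h (T x)))).symm

theorem adjoint_harmonicProj_apply [CompleteSpace H] {T g : H →L[ℝ] H} (hT : T * T = 0)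
    (h₁ : ∀ x, x - T (g x) ∈ (LinearMap.range (T : H →ₗ[ℝ] H))ᗮ)
    (h₂ : ∀ x, g (T x) ∈ (LinearMap.ker (T : H →ₗ[ℝ] H))ᗮ) (x : H) :
    ContinuousLinearMap.adjoint T (harmonicProj T g x) = 0 := by
  have hle : LinearMap.range (T : H →ₗ[ℝ] H) ≤ LinearMap.ker (T : H →ₗ[ℝ] H) := by
    rintro _ ⟨y, rfl⟩
    simpa using congrArg (· y) hT
  have hx : harmonicProj T g x = x - T (g x) - g (T x) := by
    simp [harmonicProj]
    abel
  have hmem : harmonicProj T g x ∈ (LinearMap.range (T : H →ₗ[ℝ] H))ᗮ :=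
    hx ▸ sub_mem (h₁ x) (Submodule.orthogonal_le hle (h₂ x))
  rwa [ContinuousLinearMap.orthogonal_range] at hmem

theorem exists_harmonic_of_cycle [CompleteSpace H] {Hgr : ℤ × ℤ → Submodule ℝ H}
    {d g : H →L[ℝ] H} {D P : (H →L[ℝ] H)⟦X⟧} (hD : D * D = 0) (hd : constantCoeff D = d)
    (hP : (1 + (D - C d) * C g) * P = D - C d) (hDgr : MapsGraded Hgr 1 D)
    (hg : MapsGraded Hgr (-1) (C g)) (h₁ : ∀ x, x - d (g x) ∈ (LinearMap.range (d : H →ₗ[ℝ] H))ᗮ)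
    (h₂ : ∀ x, g (d x) ∈ (LinearMap.ker (d : H →ₗ[ℝ] H))ᗮ) {p q : ℤ} {r : ℕ} {x : ℕ → H}
    (hx₀ : d (x 0) = 0) (hxgr : ∀ n < r, x n ∈ Hgr (p + n, q - n))
    (hx : EqOn (act D x) 0 (Set.Iio r)) :
    ∃ ω : ℕ → H, ω 0 = 0 ∧
      (∀ n < r, d (ω n) = 0 ∧ ContinuousLinearMap.adjoint d (ω n) = 0 ∧ ω n ∈ Hgr (p + n, q - n)) ∧
      EqOn (act (C (harmonicProj d g) * P) (Pi.single 0 (harmonicProj d g (x 0)) - ω)) 0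
        (Set.Iio r) := by
  have hdd := mul_self_eq_zero_of_constantCoeff hD hd
  have hdgd := mul_mul_self_eq_of_sub_mem_orthogonal h₁
  obtain ⟨W, hW₀, hWgr, hW⟩ :=
    exists_harmonicProj_eqOn_zero_of_cycle hD hd hP hdgd hDgr hg hx₀ hxgr hx
  have hπgr := mapsGraded_C_harmonicProj (hDgr.C_of_constantCoeff_eq hd) hg
  refine ⟨harmonicProj d g • W, by simp [hW₀], fun n hn => ⟨?_, ?_, ?_⟩, hW⟩
  · simpa using congrArg (· (W n)) (mul_harmonicProj hdd hdgd)
  · exact adjoint_harmonicProj_apply hdd h₁ h₂ _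
  · simpa [C_act] using hπgr.act_mem hWgr n hn

theorem memZ_iff_exists_cycle {Hgr : ℤ × ℤ → Submodule ℝ H} {D : ℕ → H →L[ℝ] H} {r : ℕ}
    {p k : ℤ} {α : H} :
    MemZ Hgr D r p k α ↔ α ∈ Hgr (p, k - p) ∧ D 0 α = 0 ∧
      ∃ x : ℕ → H, x 0 = α ∧ (∀ n < r, x n ∈ Hgr (p + n, k - p - n)) ∧
        EqOn (act (mk D) x) 0 (Set.Iio r) := by
  constructor
  · rintro ⟨hα, h0, z, hz, hstar⟩
    refine ⟨hα, h0, Function.update (-z) 0 α, by simp, fun n hn => ?_, fun n hn => ?_⟩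
    · rcases n with _ | n
      · simpa using hα
      · simpa using neg_mem (hz (n + 1) (by omega) (by omega))
    · rcases Nat.eq_zero_or_pos n with rfl | hn0
      · simp [act_apply_zero, h0]
      have hterm : ∀ i ∈ range n, D i (Function.update (-z) 0 α (n - i)) = -D i (z (n - i)) := by
        intro i hi
        rw [Function.update_of_ne (by simp at hi; omega)]
        simp
      simp only [act_eq_sum_range_add, coeff_mk, ContinuousLinearMap.smul_def,
        Function.update_self, Pi.zero_apply]
      rw [sum_congr rfl hterm, sum_neg_distrib, ← hstar n hn0 (by simp at hn; omega),
        neg_add_cancel]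
  · rintro ⟨hα, h0, x, rfl, hx, hcyc⟩
    refine ⟨hα, h0, -x, fun j _ _ => by simpa using neg_mem (hx j (by omega)),
      fun n hn1 hn2 => ?_⟩
    have := hcyc (show n ∈ Set.Iio r by simp; omega)
    rw [act_eq_sum_range_add, Pi.zero_apply, add_eq_zero_iff_neg_eq] at this
    simpa [sum_neg_distrib] using this.symm

end Hilbert

end Multicomplex

end

open Multicomplex PowerSeries in
theorem memZ_iff_rumin_general
    {H : Type*} [NormedAddCommGroup H] [InnerProductSpace ℝ H] [CompleteSpace H]
    (Hgr : ℤ × ℤ → Submodule ℝ H)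
    (D : ℕ → H →L[ℝ] H)
    (hDdeg : ∀ (i : ℕ) (a b : ℤ), ∀ x ∈ Hgr (a, b), D i x ∈ Hgr (a + (i : ℤ), b + 1 - (i : ℤ)))
    (hDD : ∀ n : ℕ, ∑ i ∈ Finset.range (n + 1), (D i).comp (D (n - i)) = 0)
    (g : H →L[ℝ] H)
    (hdg_perp : ∀ x : H, x - D 0 (g x) ∈ (LinearMap.range (D 0 : H →ₗ[ℝ] H))ᗮ)
    (hgd_mem : ∀ x : H, g (D 0 x) ∈ (LinearMap.ker (D 0 : H →ₗ[ℝ] H))ᗮ)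
    (hgdeg : ∀ (a b : ℤ), ∀ x ∈ Hgr (a, b), g x ∈ Hgr (a, b - 1))
    (P : ℕ → H →L[ℝ] H) (hP1 : P 1 = D 1)
    (hPrec : ∀ r : ℕ, 2 ≤ r →
      P r = D r - ∑ j ∈ Finset.Ico 1 r, (D (r - j)).comp (g.comp (P j)))
    (dc : ℕ → H →L[ℝ] H)
    (hdc : ∀ r : ℕ, dc r = P r - g.comp ((D 0).comp (P r)) - (D 0).comp (g.comp (P r)))
    (Pi0 : H →L[ℝ] H)
    (hPi0 : ∀ x : H, Pi0 x = x - g (D 0 x) - D 0 (g x))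
    (r : ℕ) (p k : ℤ) (α : H) (hα : α ∈ Hgr (p, k - p)) :
    MemZ Hgr D r p k α ↔
      (∃ β ∈ Hgr (p, k - p - 1), α = D 0 β + Pi0 α) ∧
      ∃ ω : ℕ → H,
        (∀ i : ℕ, 1 ≤ i → i ≤ r - 2 →
          D 0 (ω i) = 0 ∧ ContinuousLinearMap.adjoint (D 0) (ω i) = 0 ∧
            ω i ∈ Hgr (p + (i : ℤ), k - p - (i : ℤ))) ∧
        (∀ i : ℕ, 1 ≤ i → i ≤ r - 1 →
          dc i (Pi0 α) = ∑ j ∈ Finset.Ico 1 i, dc (i - j) (ω j)) := by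
  obtain rfl : Pi0 = harmonicProj (D 0) g := by ext; simp [hPi0, harmonicProj]
  obtain rfl : dc = fun i => harmonicProj (D 0) g * P i := by
    funext i; ext; simp [hdc, harmonicProj]
  have hD := mk_mul_mk_self_eq_zero hDD
  have hd : constantCoeff (mk D) = D 0 := by simp
  have hP := one_add_mul_mk_sub_C hP1 hPrec
  have hdd := mul_self_eq_zero_of_constantCoeff hD hd
  have hdgd := mul_mul_self_eq_of_sub_mem_orthogonal hdg_perp
  have hDgr : MapsGraded Hgr 1 (mk D) := fun i a b v hv => by simpa using hDdeg i a b v hv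
  have hg : MapsGraded Hgr (-1) (C g) :=
    mapsGraded_C fun a b v hv => by simpa [sub_eq_add_neg] using hgdeg a b v hv
  have hdecomp := exists_eq_smul_add_harmonicProj_iff hdd hdgd hg hα
  rw [memZ_iff_exists_cycle]
  constructor
  · rintro ⟨-, hd0, x, rfl, hxgr, hx⟩
    obtain ⟨ω, hω₀, hω, hrel⟩ :=
      exists_harmonic_of_cycle hD hd hP hDgr hg hdg_perp hgd_mem hd0 hxgr hx
    exact ⟨hdecomp.2 hd0, ω, fun i _ _ => hω i (by omega),
      (eqOn_act_C_mul_single_sub_iff (fun _ _ _ => rfl) hω₀).1 hrel⟩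
  · rintro ⟨hβ, ω, hω, hrel⟩
    obtain ⟨x, hx₀, hxgr, hx⟩ := exists_cycle_of_harmonic hD hd hP hdgd hDgr hg (hdecomp.1 hβ) hα
      (fun i h₁ h₂ => ⟨(hω i h₁ h₂).1, (hω i h₁ h₂).2.2⟩)
      ((eqOn_act_C_mul_single_sub_iff
        (fun j h₁ h₂ => Set.indicator_of_mem (Set.mem_Icc.2 ⟨h₁, h₂⟩) ω) (by simp)).2 hrel)
    exact ⟨hα, hdecomp.1 hβ, x, hx₀, hxgr, hx⟩

/-- **Characterisation of the spaces `Z_r^{p,k}` in terms of Rumin forms and the Rumin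
differentials** (Proposition 3.9 of the paper).  For `r ≥ 2` and `α ∈ H_{p,k−p}`:
`α ∈ Z_r^{p,k}` iff `α = d₀β + Π₀α` for some `β ∈ H_{p,k−p−1}`, and there exist harmonic
elements `ω̄_{p+i} ∈ ker d₀ ∩ ker d₀* ∩ H_{p+i,k−p−i}` for `i = 1, …, r−2` such that
`d_c^i(Π₀α) = ∑_{j=1}^{i−1} d_c^{i−j}(ω̄_{p+j})` for each `i = 1, …, r−1`. -/
theorem memZ_iff_rumin
    {H : Type*} [NormedAddCommGroup H] [InnerProductSpace ℝ H] [CompleteSpace H]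
    (Hgr : ℤ × ℤ → Submodule ℝ H)
    (hinternal : DirectSum.IsInternal Hgr)
    (hclosed : ∀ ab : ℤ × ℤ, IsClosed (Hgr ab : Set H))
    (horth : ∀ ab cd : ℤ × ℤ, ab ≠ cd → ∀ x ∈ Hgr ab, ∀ y ∈ Hgr cd, ⟪x, y⟫_ℝ = 0)
    (hfin : {ab : ℤ × ℤ | Hgr ab ≠ ⊥}.Finite)
    (s : ℕ) (D : ℕ → H →L[ℝ] H)
    (hDvan : ∀ i : ℕ, s ≤ i → D i = 0)
    (hDdeg : ∀ (i : ℕ) (a b : ℤ), ∀ x ∈ Hgr (a, b), D i x ∈ Hgr (a + (i : ℤ), b + 1 - (i : ℤ)))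
    (hDD : ∀ n : ℕ, ∑ i ∈ Finset.range (n + 1), (D i).comp (D (n - i)) = 0)
    (hd0closed : IsClosed (LinearMap.range (D 0 : H →ₗ[ℝ] H) : Set H))
    (g : H →L[ℝ] H)
    (hdg_perp : ∀ x : H, x - D 0 (g x) ∈ (LinearMap.range (D 0 : H →ₗ[ℝ] H))ᗮ)
    (hgd_mem : ∀ x : H, g (D 0 x) ∈ (LinearMap.ker (D 0 : H →ₗ[ℝ] H))ᗮ)
    (hgd_perp : ∀ x : H, x - g (D 0 x) ∈ ((LinearMap.ker (D 0 : H →ₗ[ℝ] H))ᗮ)ᗮ)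
    (hgvan : ∀ x ∈ (LinearMap.range (D 0 : H →ₗ[ℝ] H))ᗮ, g x = 0)
    (hgdeg : ∀ (a b : ℤ), ∀ x ∈ Hgr (a, b), g x ∈ Hgr (a, b - 1))
    (P : ℕ → H →L[ℝ] H) (hP1 : P 1 = D 1)
    (hPrec : ∀ r : ℕ, 2 ≤ r →
      P r = D r - ∑ j ∈ Finset.Ico 1 r, (D (r - j)).comp (g.comp (P j)))
    (dc : ℕ → H →L[ℝ] H)
    (hdc : ∀ r : ℕ, dc r = P r - g.comp ((D 0).comp (P r)) - (D 0).comp (g.comp (P r)))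
    (Pi0 : H →L[ℝ] H)
    (hPi0 : ∀ x : H, Pi0 x = x - g (D 0 x) - D 0 (g x))
    (r : ℕ) (hr : 2 ≤ r) (p k : ℤ) (α : H) (hα : α ∈ Hgr (p, k - p)) :
    MemZ Hgr D r p k α ↔
      (∃ β ∈ Hgr (p, k - p - 1), α = D 0 β + Pi0 α) ∧
      ∃ ω : ℕ → H,
        (∀ i : ℕ, 1 ≤ i → i ≤ r - 2 →
          D 0 (ω i) = 0 ∧ ContinuousLinearMap.adjoint (D 0) (ω i) = 0 ∧
            ω i ∈ Hgr (p + (i : ℤ), k - p - (i : ℤ))) ∧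
        (∀ i : ℕ, 1 ≤ i → i ≤ r - 1 →
          dc i (Pi0 α) = ∑ j ∈ Finset.Ico 1 i, dc (i - j) (ω j)) :=
  memZ_iff_rumin_general Hgr D hDdeg hDD g hdg_perp hgd_mem hgdeg P hP1 hPrec dc hdc Pi0 hPi0 r p k
    α hα
end

section
/- The operator Π satisfies: Π ∘ Π = Π, the range of Π equals F := Im g + Im(d∘g), and the kernel of Π equals E := ker g ∩ ker(g∘d); that is, Π is the projection of M onto F along E (in particular M = F ⊕ E). -/
/-- For an `s`-multicomplex `(M, d₀, …, d_s)` with weights between `0` and `Q`, total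
differential `d = ∑ dᵢ`, a partial inverse `g` of `d₀`, and
`Π := (∑_{j=0}^{Q} b^j) ∘ g ∘ d + d ∘ (∑_{j=0}^{Q} b^j) ∘ g` where `b := g∘d₀ − g∘d`,
the operator `Π` satisfies `Π ∘ Π = Π`, its range equals `F := Im g + Im (d∘g)`, and its
kernel equals `E := ker g ∩ ker (g∘d)`; that is, `Π` is the projection of `M` onto `F`
along `E` (in particular `M = F ⊕ E`). -/
theorem pi_is_projection_onto_F_along_E
    {R M : Type*} [CommRing R] [AddCommGroup M] [Module R M]
    (Mgr : ℤ × ℤ → Submodule R M)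
    (hinternal : DirectSum.IsInternal Mgr)
    (s : ℕ) (D : ℕ → M →ₗ[R] M)
    (hDvan : ∀ i : ℕ, s ≤ i → D i = 0)
    (hDdeg : ∀ (i : ℕ) (a b : ℤ), ∀ x ∈ Mgr (a, b), D i x ∈ Mgr (a + (i : ℤ), b + 1 - (i : ℤ)))
    (hDD : ∀ n : ℕ, ∑ i ∈ Finset.range (n + 1), D i ∘ₗ D (n - i) = 0)
    (Q : ℕ) (hQ : ∀ a b : ℤ, a < 0 ∨ (Q : ℤ) < a → Mgr (a, b) = ⊥)
    (d : M →ₗ[R] M) (hd : d = ∑ i ∈ Finset.range (s + 1), D i)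
    (g : M →ₗ[R] M)
    (hgdeg : ∀ (a b : ℤ), ∀ x ∈ Mgr (a, b), g x ∈ Mgr (a, b - 1))
    (hgg : g ∘ₗ g = 0)
    (hgdg : g ∘ₗ D 0 ∘ₗ g = g)
    (hdgd : D 0 ∘ₗ g ∘ₗ D 0 = D 0)
    (b : M →ₗ[R] M) (hb : b = g ∘ₗ D 0 - g ∘ₗ d)
    (Pi : M →ₗ[R] M)
    (hPi : Pi = ((∑ j ∈ Finset.range (Q + 1), b ^ j) ∘ₗ g) ∘ₗ d
        + (d ∘ₗ (∑ j ∈ Finset.range (Q + 1), b ^ j)) ∘ₗ g) :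
    Pi ∘ₗ Pi = Pi ∧
    LinearMap.range Pi = LinearMap.range g ⊔ LinearMap.range (d ∘ₗ g) ∧
    LinearMap.ker Pi = LinearMap.ker g ⊓ LinearMap.ker (g ∘ₗ d) ∧
    IsCompl (LinearMap.range g ⊔ LinearMap.range (d ∘ₗ g))
      (LinearMap.ker g ⊓ LinearMap.ker (g ∘ₗ d)) := by
  classical
  set N : M →ₗ[R] M := ∑ j ∈ Finset.range (Q + 1), b ^ j with hN
  set N' : M →ₗ[R] M := ∑ j ∈ Finset.range Q, b ^ j with hN'
  -- hypotheses in multiplicative form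
  have hgg' : g * g = 0 := hgg
  have hgd0g : g * D 0 * g = g := by rw [mul_assoc]; exact hgdg
  have hb' : b = g * D 0 - g * d := hb
  have hbe : b = g * (D 0 - d) := by rw [hb', mul_sub]
  -- b ^ (Q+1) = 0
  have hbQ : b ^ (Q + 1) = (0 : M →ₗ[R] M) := by
    set S : ℕ → Submodule R M := fun k => ⨆ (p : ℤ × ℤ) (_ : (k : ℤ) ≤ p.1), Mgr p with hS
    have hS0 : ∀ x : M, x ∈ S 0 := by
      have htop : (⨆ p, Mgr p) = ⊤ := hinternal.submodule_iSup_eq_top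
      have hle : (⨆ p, Mgr p) ≤ S 0 := by
        apply iSup_le
        rintro ⟨a, c⟩
        rcases lt_or_ge a 0 with h | h
        · rw [hQ a c (Or.inl h)]; exact bot_le
        · exact le_iSup₂ (f := fun (p : ℤ × ℤ) (_ : ((0 : ℕ) : ℤ) ≤ p.1) => Mgr p) (a, c)
            (by exact_mod_cast h)
      intro x
      exact hle (htop ▸ Submodule.mem_top)
    have hSQ : S (Q + 1) = ⊥ := by
      refine le_bot_iff.mp (iSup₂_le ?_)
      rintro ⟨a, c⟩ hp
      rw [hQ a c (Or.inr (by push_cast at hp ⊢; omega))]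
    have hstep : ∀ (k : ℕ) (x : M), x ∈ S k → b x ∈ S (k + 1) := by
      intro k
      have hle : S k ≤ Submodule.comap b (S (k + 1)) := by
        refine iSup₂_le ?_
        rintro ⟨a, c⟩ hp x hx
        simp only [Submodule.mem_comap]
        have h1 : b x = g (D 0 x) - g (d x) := by
          rw [hb]; simp
        have h2 : d x = ∑ i ∈ Finset.range s, D (i + 1) x + D 0 x := by
          rw [hd, LinearMap.sum_apply, Finset.sum_range_succ']
        have hbx : b x = - ∑ i ∈ Finset.range s, g (D (i + 1) x) := by
          rw [h1, h2, map_add, map_sum]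
          abel
        rw [hbx]
        refine neg_mem (Submodule.sum_mem _ ?_)
        intro i _
        have h3 : D (i + 1) x ∈ Mgr (a + ((i + 1 : ℕ) : ℤ), c + 1 - ((i + 1 : ℕ) : ℤ)) :=
          hDdeg (i + 1) a c x hx
        have h4 := hgdeg _ _ _ h3
        exact Submodule.mem_iSup_of_mem _
          (Submodule.mem_iSup_of_mem (by push_cast at hp ⊢; omega) h4)
      intro x hx; exact hle hx
    have hpow : ∀ (k : ℕ) (x : M), (b ^ k) x ∈ S k := by
      intro k
      induction k with
      | zero => intro x; simpa using hS0 x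
      | succ n ih =>
        intro x
        rw [pow_succ']
        exact hstep n _ (ih x)
    ext x
    have hx := hpow (Q + 1) x
    rw [hSQ] at hx
    simpa using hx
  -- d * d = 0
  have hdt : ∀ t : ℕ, s + 1 ≤ t → ∑ i ∈ Finset.range t, D i = d := by
    intro t ht
    rw [hd]
    symm
    apply Finset.sum_subset (Finset.range_subset_range.mpr ht)
    intro i hi hnot
    exact hDvan i (by simp only [Finset.mem_range] at hi hnot; omega)
  have hd2 : d * d = (0 : M →ₗ[R] M) := by
    set T := 2 * s + 1 with hT
    have hflip := Finset.sum_range_diag_flip T (fun i j => (D i * D j : M →ₗ[R] M))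
    have hLHS : ∑ m ∈ Finset.range T, ∑ k ∈ Finset.range (m + 1),
        (D k * D (m - k) : M →ₗ[R] M) = 0 := by
      apply Finset.sum_eq_zero
      intro m _
      exact hDD m
    have hRHS : ∑ m ∈ Finset.range T, ∑ k ∈ Finset.range (T - m),
        (D m * D k : M →ₗ[R] M) = d * d := by
      have heach : ∀ m ∈ Finset.range T, ∑ k ∈ Finset.range (T - m),
          (D m * D k : M →ₗ[R] M) = D m * d := by
        intro m hm
        rw [← Finset.mul_sum]
        by_cases hms : s ≤ m
        · rw [hDvan m hms, zero_mul, zero_mul]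
        · rw [hdt (T - m) (by simp only [Finset.mem_range] at hm; omega)]
      rw [Finset.sum_congr rfl heach, ← Finset.sum_mul, hdt T (by omega)]
    rw [← hRHS, ← hflip]
    exact hLHS
  -- algebraic identities
  have hgb : g * b = 0 := by
    rw [hb', mul_sub, ← mul_assoc, ← mul_assoc, hgg', zero_mul, zero_mul, sub_zero]
  have hNs : N = b * N' + 1 := by rw [hN, hN']; exact geom_sum_succ
  have hNs2 : N = b ^ Q + N' := by rw [hN, hN']; exact geom_sum_succ'
  have hgN : g * N = g := by
    rw [hNs, mul_add, mul_one, ← mul_assoc, hgb, zero_mul, zero_add]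
  have hgd0b : g * D 0 * b = b := by
    conv_lhs => rw [hbe, ← mul_assoc, hgd0g]
    exact hbe.symm
  have hbN' : b * N' = N - 1 := by rw [hNs]; abel
  have hbN : b * N = N - 1 := by
    conv_lhs => rw [hNs2, mul_add, ← pow_succ', hbQ, hbN']
    rw [zero_add]
  have hNmulb : N * b = N - 1 := by
    have hcomm : b * N = N * b := by
      rw [hN, Finset.mul_sum, Finset.sum_mul]
      refine Finset.sum_congr rfl fun j _ => ?_
      rw [← pow_succ', ← pow_succ]
    rw [← hcomm]; exact hbN
  have hgd : g * d = g * D 0 - b := by rw [hb']; abel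
  have h1 : g * D 0 * N = N - 1 + g * D 0 := by
    rw [hNs, mul_add, mul_one, ← mul_assoc, hgd0b]
    abel
  have hgdN : g * d * N = g * D 0 := by
    rw [hgd, sub_mul, h1, hbN]
    abel
  have key1 : g * d * N * g = g := by rw [hgdN, hgd0g]
  have hgdg3 : g * d * g = g - b * g := by rw [hgd, sub_mul, hgd0g]
  have key2 : N * g * d * g = g := by
    rw [mul_assoc N g d, mul_assoc N (g * d) g, hgdg3, mul_sub, ← mul_assoc, hNmulb,
      sub_mul, one_mul]
    abel
  have hgNg : g * N * g = 0 := by rw [hgN, hgg']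
  have hPi' : Pi = N * g * d + d * N * g := hPi
  -- idempotence
  have hidem : Pi ∘ₗ Pi = Pi := by
    show Pi * Pi = Pi
    rw [hPi']
    calc (N * g * d + d * N * g) * (N * g * d + d * N * g)
        = N * (g * d * N * g) * d + N * g * (d * d) * (N * g)
          + d * (N * (g * N * g)) * d + d * N * (g * d * N * g) := by noncomm_ring
      _ = N * g * d + d * N * g := by
          rw [key1, hd2, hgNg]
          noncomm_ring
  have hidem' : Pi * Pi = Pi := hidem
  -- projection identities
  have hPig : Pi * g = g := by
    calc Pi * g = N * g * d * g + (d * N) * (g * g) := by rw [hPi']; noncomm_ring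
      _ = g := by rw [key2, hgg', mul_zero, add_zero]
  have hPidg : Pi * (d * g) = d * g := by
    calc Pi * (d * g) = (N * g) * (d * d) * g + d * (N * g * d * g) := by
          rw [hPi']; noncomm_ring
      _ = d * g := by rw [hd2, key2, mul_zero, zero_mul, zero_add]
  have hgPi : g * Pi = g := by
    calc g * Pi = (g * N) * g * d + g * d * N * g := by rw [hPi']; noncomm_ring
      _ = g := by rw [hgN, hgg', zero_mul, key1, zero_add]
  have hgdPi : (g * d) * Pi = g * d := by
    calc (g * d) * Pi = g * d * N * g * d + (g * (d * d)) * (N * g) := by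
          rw [hPi']; noncomm_ring
      _ = g * d := by rw [key1, hd2, mul_zero, zero_mul, add_zero]
  -- factorization N * g = g * c
  set c : M →ₗ[R] M := (D 0 - d) * (N' * g) + 1 with hc
  have hNgc : N * g = g * c := by
    rw [hNs, hbe, hc]
    noncomm_ring
  -- range
  have hrange : LinearMap.range Pi = LinearMap.range g ⊔ LinearMap.range (d ∘ₗ g) := by
    apply le_antisymm
    · rintro x ⟨y, rfl⟩
      have hPieq : Pi = g * (c * d) + (d * g) * c := by
        rw [hPi', mul_assoc d N g, hNgc]
        noncomm_ring
      rw [hPieq]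
      have heq : (g * (c * d) + (d * g) * c) y = g ((c * d) y) + (d ∘ₗ g) (c y) := rfl
      rw [heq]
      exact Submodule.add_mem_sup ⟨_, rfl⟩ ⟨_, rfl⟩
    · refine sup_le ?_ ?_
      · rintro x ⟨y, rfl⟩
        exact ⟨g y, DFunLike.congr_fun hPig y⟩
      · rintro x ⟨y, rfl⟩
        exact ⟨(d ∘ₗ g) y, DFunLike.congr_fun hPidg y⟩
  -- kernel
  have hker : LinearMap.ker Pi = LinearMap.ker g ⊓ LinearMap.ker (g ∘ₗ d) := by
    ext x
    simp only [LinearMap.mem_ker, Submodule.mem_inf, LinearMap.comp_apply]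
    constructor
    · intro hx
      have h1 := DFunLike.congr_fun hgPi x
      have h2 := DFunLike.congr_fun hgdPi x
      simp only [Module.End.mul_apply, hx, map_zero] at h1 h2
      exact ⟨h1.symm, h2.symm⟩
    · rintro ⟨h1, h2⟩
      have heq : Pi x = N (g (d x)) + d (N (g x)) := by rw [hPi']; rfl
      rw [heq, h1, h2]
      simp
  -- complementarity
  have hcompl : IsCompl (LinearMap.range Pi) (LinearMap.ker Pi) := by
    constructor
    · rw [Submodule.disjoint_def]
      rintro x ⟨y, rfl⟩ hx
      rw [LinearMap.mem_ker] at hx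
      have h := DFunLike.congr_fun hidem y
      rw [LinearMap.comp_apply] at h
      rw [← h, hx]
    · rw [codisjoint_iff, eq_top_iff]
      intro x _
      rw [Submodule.mem_sup]
      refine ⟨Pi x, ⟨x, rfl⟩, x - Pi x, ?_, by abel⟩
      rw [LinearMap.mem_ker, map_sub]
      have h := DFunLike.congr_fun hidem x
      rw [LinearMap.comp_apply] at h
      rw [h, sub_self]
  exact ⟨hidem, hrange, hker, by rw [← hrange, ← hker]; exact hcompl⟩
end

section
/- The projection operators satisfy: (1) g ∘ Π_E = 0 and Π_E ∘ g = 0; (2) d ∘ Π = Π ∘ d and d ∘ Π_E = Π_E ∘ d; (3) Π_0 ∘ Π_E ∘ Π_0 = Π_0 and Π_E ∘ Π_0 ∘ Π_E = Π_E. -/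
/-!
The operator `b = g (d₀ - d) = -g ∑_{i ≥ 1} dᵢ` raises the first degree, so it is nilpotent and
`T = ∑_{j ≤ Q} bʲ` is a two-sided inverse of `1 - b`. From `g g = 0` and `g d₀ g = g` one gets, for
`h = T g`, the relations `h h = 0`, `h d h = h`, `g h = h g = 0` and `g d h = h d g = g`.
Whenever `h h = 0`, `h d h = h` and `d d = 0`, the element `h d + d h` is an idempotent commuting
with `d`; this applies both to `Π = h d + d h` and to `1 - Π₀ = g d₀ + d₀ g`. Finally `Π_E`
annihilates `g`, and `Π₀` annihilates `h`, on both sides, and `e (1 - p) e = e` whenever `e` is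
idempotent and `e p e = 0`.
-/

open Finset

section PartialInverse

variable {A : Type*} [Ring A]

theorem IsIdempotentElem.mul_one_sub_mul_self {e p : A} (he : IsIdempotentElem e)
    (hp : e * p * e = 0) : e * (1 - p) * e = e := by
  rw [mul_sub, mul_one, sub_mul, he.eq, hp, sub_zero]

variable {d h : A}

theorem isIdempotentElem_mul_add_mul (hdd : d * d = 0) (hhh : h * h = 0)
    (hhdh : h * d * h = h) : IsIdempotentElem (h * d + d * h) :=
  calc (h * d + d * h) * (h * d + d * h)
      = h * d * h * d + h * (d * d) * h + d * (h * h) * d + d * (h * d * h) := by noncomm_ring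
    _ = h * d + d * h := by rw [hhdh, hdd, hhh]; noncomm_ring

theorem commute_mul_add_mul (hdd : d * d = 0) : Commute d (h * d + d * h) :=
  calc d * (h * d + d * h) = d * h * d + d * d * h := by noncomm_ring
    _ = h * (d * d) + d * h * d := by rw [hdd]; noncomm_ring
    _ = (h * d + d * h) * d := by noncomm_ring

theorem mul_mul_add_mul_eq_self {g : A} (hgh : g * h = 0) (hgdh : g * d * h = g) :
    g * (h * d + d * h) = g := by
  rw [mul_add, ← mul_assoc, ← mul_assoc, hgh, zero_mul, hgdh, zero_add]

theorem mul_add_mul_mul_eq_self {g : A} (hhg : h * g = 0) (hhdg : h * d * g = g) :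
    (h * d + d * h) * g = g := by
  rw [add_mul, mul_assoc d, hhg, mul_zero, add_zero, hhdg]

theorem mul_mul_add_mul_mul_eq_zero {e : A} (heh : e * h = 0) (hhe : h * e = 0) :
    e * (h * d + d * h) * e = 0 :=
  calc e * (h * d + d * h) * e = e * h * (d * e) + e * d * (h * e) := by noncomm_ring
    _ = 0 := by rw [heh, hhe, zero_mul, mul_zero, add_zero]

end PartialInverse

section Perturbation

variable {A : Type*} [Ring A] {g δ d T : A}

theorem mul_eq_self_of_one_sub_mul_eq_one {x b : A} (hxb : x * b = 0) (hT : (1 - b) * T = 1) :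
    x * T = x :=
  calc x * T = x * (1 - b) * T := by rw [mul_sub, mul_one, hxb, sub_zero]
    _ = x := by rw [mul_assoc, hT, mul_one]

theorem mul_mul_eq_of_one_sub_mul_eq_one (hgδg : g * δ * g = g)
    (hT : (1 - g * (δ - d)) * T = 1) : g * d * T = g * δ :=
  calc g * d * T = g * δ * (1 - g * (δ - d)) * T := by
        rw [mul_sub (g * δ), mul_one, ← mul_assoc, hgδg]; noncomm_ring
    _ = g * δ := by rw [mul_assoc, hT, mul_one]

theorem mul_mul_mul_eq_of_mul_one_sub_eq_one (hgδg : g * δ * g = g)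
    (hT : T * (1 - g * (δ - d)) = 1) : T * (g * d * g) = g :=
  calc T * (g * d * g) = T * (1 - g * (δ - d)) * g := by
        rw [mul_assoc T, sub_mul, mul_sub g, sub_mul (g * δ), hgδg]; noncomm_ring
    _ = g := by rw [hT, one_mul]

theorem projection_identities_of_perturbation (hgg : g * g = 0) (hgδg : g * δ * g = g)
    (hδδ : δ * δ = 0) (hdd : d * d = 0) (hT : (1 - g * (δ - d)) * T = 1)
    (hT' : T * (1 - g * (δ - d)) = 1) {P P₀ : A} (hP : P = T * g * d + d * (T * g))
    (hP₀ : P₀ = g * δ + δ * g) :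
    (g * (1 - P) = 0 ∧ (1 - P) * g = 0) ∧ (d * P = P * d ∧ d * (1 - P) = (1 - P) * d) ∧
    ((1 - P₀) * (1 - P) * (1 - P₀) = 1 - P₀ ∧ (1 - P) * (1 - P₀) * (1 - P) = 1 - P) := by
  have hgT : g * T = g :=
    mul_eq_self_of_one_sub_mul_eq_one (by rw [← mul_assoc, hgg, zero_mul]) hT
  have hgh : g * (T * g) = 0 := by rw [← mul_assoc, hgT, hgg]
  have hhg : T * g * g = 0 := by rw [mul_assoc, hgg, mul_zero]
  have hgdh : g * d * (T * g) = g := by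
    rw [← mul_assoc, mul_mul_eq_of_one_sub_mul_eq_one hgδg hT, hgδg]
  have hhdg : T * g * d * g = g := by
    rw [mul_assoc T, mul_assoc T, mul_mul_mul_eq_of_mul_one_sub_eq_one hgδg hT']
  have hhh : T * g * (T * g) = 0 := by rw [mul_assoc, hgh, mul_zero]
  have hhdh : T * g * d * (T * g) = T * g := by rw [mul_assoc T, mul_assoc T, hgdh]
  have hPg : (1 - P₀) * g = 0 := by
    rw [sub_mul, one_mul, hP₀, mul_add_mul_mul_eq_self hgg hgδg, sub_self]
  have hgP : g * (1 - P₀) = 0 := by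
    rw [mul_sub, mul_one, hP₀, mul_mul_add_mul_eq_self hgg hgδg, sub_self]
  have hP₀T : (1 - P₀) * T = 1 - P₀ :=
    mul_eq_self_of_one_sub_mul_eq_one (by rw [← mul_assoc, hPg, zero_mul]) hT
  have hP₀h : (1 - P₀) * (T * g) = 0 := by rw [← mul_assoc, hP₀T, hPg]
  have hhP₀ : T * g * (1 - P₀) = 0 := by rw [mul_assoc, hgP, mul_zero]
  have hgE : g * (1 - P) = 0 := by
    rw [mul_sub, mul_one, hP, mul_mul_add_mul_eq_self hgh hgdh, sub_self]
  have hEg : (1 - P) * g = 0 := by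
    rw [sub_mul, one_mul, hP, mul_add_mul_mul_eq_self hhg hhdg, sub_self]
  have hdP : Commute d P := by rw [hP]; exact commute_mul_add_mul hdd
  refine ⟨⟨hgE, hEg⟩, ⟨hdP.eq, ((Commute.one_right d).sub_right hdP).eq⟩, ?_, ?_⟩
  · exact (hP₀ ▸ (isIdempotentElem_mul_add_mul hδδ hgg hgδg).one_sub).mul_one_sub_mul_self
      (hP ▸ mul_mul_add_mul_mul_eq_zero hP₀h hhP₀)
  · exact (hP ▸ (isIdempotentElem_mul_add_mul hdd hhh hhdh).one_sub).mul_one_sub_mul_self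
      (hP₀ ▸ mul_mul_add_mul_mul_eq_zero hEg hgE)

end Perturbation

theorem sum_mul_sum_eq_zero_of_multicomplex {A : Type*} [Ring A] {s : ℕ} {D : ℕ → A}
    (hvan : ∀ i, s ≤ i → D i = 0) (hDD : ∀ n, ∑ i ∈ range (n + 1), D i * D (n - i) = 0) :
    (∑ i ∈ range s, D i) * ∑ i ∈ range s, D i = 0 := by
  have htrunc : ∀ n, s ≤ n → ∑ i ∈ range n, D i = ∑ i ∈ range s, D i :=
    fun _ hn => eventually_constant_sum hvan hn
  have hrow : ∀ i ∈ range (2 * s),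
      D i * ∑ j ∈ range (2 * s - i), D j = D i * ∑ j ∈ range s, D j := by
    intro i _
    rcases lt_or_ge i s with hi | hi
    · rw [htrunc _ (by omega)]
    · rw [hvan i hi, zero_mul, zero_mul]
  calc (∑ i ∈ range s, D i) * ∑ i ∈ range s, D i
      = ∑ i ∈ range (2 * s), D i * ∑ j ∈ range (2 * s - i), D j := by
        rw [sum_congr rfl hrow, ← sum_mul, htrunc (2 * s) (by omega)]
    _ = ∑ n ∈ range (2 * s), ∑ i ∈ range (n + 1), D i * D (n - i) := by
        simp only [mul_sum]; exact (sum_range_diag_flip _ fun i j => D i * D j).symm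
    _ = 0 := sum_eq_zero fun n _ => hDD n

section ColumnFiltration

variable {R M : Type*} [CommRing R] [AddCommGroup M] [Module R M]

theorem pow_eq_zero_of_le_comap_succ {F : ℤ → Submodule R M} {f : Module.End R M}
    (hf : ∀ a, F a ≤ (F (a + 1)).comap f) {n : ℕ} (htop : F 0 = ⊤) (hbot : F n = ⊥) :
    f ^ n = 0 := by
  have hpow : ∀ k : ℕ, ∀ a, F a ≤ (F (a + k)).comap (f ^ k) := by
    intro k
    induction k with
    | zero => intro a x hx; simpa using hx
    | succ k ih =>
      intro a x hx
      rw [Submodule.mem_comap, pow_succ', Module.End.mul_apply, Nat.cast_succ, ← add_assoc]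
      exact hf _ (ih a hx)
  ext x
  simpa [hbot] using hpow n 0 (htop ▸ Submodule.mem_top : x ∈ F 0)

def columnFiltration (Mgr : ℤ × ℤ → Submodule R M) (a : ℤ) : Submodule R M :=
  ⨆ (p : ℤ × ℤ) (_ : a ≤ p.1), Mgr p

variable {Mgr : ℤ × ℤ → Submodule R M}

theorem le_columnFiltration {a : ℤ} {p : ℤ × ℤ} (h : a ≤ p.1) :
    Mgr p ≤ columnFiltration Mgr a :=
  le_iSup₂_of_le p h le_rfl

theorem columnFiltration_antitone : Antitone (columnFiltration Mgr) :=
  fun _ _ hab => iSup₂_le fun _ hp => le_columnFiltration (hab.trans hp)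

theorem columnFiltration_eq_top {a : ℤ} (hsup : iSup Mgr = ⊤)
    (h : ∀ p : ℤ × ℤ, p.1 < a → Mgr p = ⊥) :
    columnFiltration Mgr a = ⊤ := by
  refine eq_top_iff.2 (hsup ▸ iSup_le fun p => ?_)
  rcases lt_or_ge p.1 a with hp | hp
  · simp [h p hp]
  · exact le_columnFiltration hp

theorem columnFiltration_eq_bot {a : ℤ} (h : ∀ p : ℤ × ℤ, a ≤ p.1 → Mgr p = ⊥) :
    columnFiltration Mgr a = ⊥ :=
  iSup₂_eq_bot.2 h

theorem columnFiltration_le_comap_succ {f : Module.End R M}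
    (hf : ∀ p, Mgr p ≤ (columnFiltration Mgr (p.1 + 1)).comap f) (a : ℤ) :
    columnFiltration Mgr a ≤ (columnFiltration Mgr (a + 1)).comap f :=
  iSup₂_le fun p hp => (hf p).trans
    (Submodule.comap_mono (columnFiltration_antitone (by omega)))

theorem le_comap_columnFiltration_succ {D : ℕ → Module.End R M} {g : Module.End R M}
    (hDdeg : ∀ (i : ℕ) (a b : ℤ), ∀ x ∈ Mgr (a, b), D i x ∈ Mgr (a + (i : ℤ), b + 1 - (i : ℤ)))
    (hgdeg : ∀ (a b : ℤ), ∀ x ∈ Mgr (a, b), g x ∈ Mgr (a, b - 1)) (s : ℕ) (p : ℤ × ℤ) :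
    Mgr p ≤ (columnFiltration Mgr (p.1 + 1)).comap (g * ∑ i ∈ range s, D (i + 1)) := by
  intro x hx
  rw [Submodule.mem_comap, Module.End.mul_apply, LinearMap.coe_sum, Finset.sum_apply, map_sum]
  refine Submodule.sum_mem _ fun i _ => le_columnFiltration ?_ (hgdeg _ _ _ (hDdeg _ _ _ x hx))
  push_cast
  omega

end ColumnFiltration

theorem projection_operators_identities_general
    {R M : Type*} [CommRing R] [AddCommGroup M] [Module R M]
    (Mgr : ℤ × ℤ → Submodule R M)
    (hinternal : DirectSum.IsInternal Mgr)
    (s : ℕ) (D : ℕ → M →ₗ[R] M)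
    (hDvan : ∀ i : ℕ, s ≤ i → D i = 0)
    (hDdeg : ∀ (i : ℕ) (a b : ℤ), ∀ x ∈ Mgr (a, b), D i x ∈ Mgr (a + (i : ℤ), b + 1 - (i : ℤ)))
    (hDD : ∀ n : ℕ, ∑ i ∈ Finset.range (n + 1), D i ∘ₗ D (n - i) = 0)
    (Q : ℕ) (hQ : ∀ a b : ℤ, a < 0 ∨ (Q : ℤ) < a → Mgr (a, b) = ⊥)
    (d : M →ₗ[R] M) (hd : d = ∑ i ∈ Finset.range (s + 1), D i)
    (g : M →ₗ[R] M)
    (hgdeg : ∀ (a b : ℤ), ∀ x ∈ Mgr (a, b), g x ∈ Mgr (a, b - 1))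
    (hgg : g ∘ₗ g = 0)
    (hgdg : g ∘ₗ D 0 ∘ₗ g = g)
    (b : M →ₗ[R] M) (hb : b = g ∘ₗ D 0 - g ∘ₗ d)
    (Pi : M →ₗ[R] M)
    (hPi : Pi = ((∑ j ∈ Finset.range (Q + 1), b ^ j) ∘ₗ g) ∘ₗ d
        + (d ∘ₗ (∑ j ∈ Finset.range (Q + 1), b ^ j)) ∘ₗ g)
    (PiE : M →ₗ[R] M) (hPiE : PiE = LinearMap.id - Pi)
    (Pi0 : M →ₗ[R] M) (hPi0 : Pi0 = LinearMap.id - g ∘ₗ D 0 - D 0 ∘ₗ g) :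
    (g ∘ₗ PiE = 0 ∧ PiE ∘ₗ g = 0) ∧
    (d ∘ₗ Pi = Pi ∘ₗ d ∧ d ∘ₗ PiE = PiE ∘ₗ d) ∧
    ((Pi0 ∘ₗ PiE) ∘ₗ Pi0 = Pi0 ∧ (PiE ∘ₗ Pi0) ∘ₗ PiE = PiE) := by
  simp only [← Module.End.mul_eq_comp, ← Module.End.one_eq_id] at hDD hgg hgdg hb hPi hPiE hPi0 ⊢
  have hdd : d * d = 0 := by
    rw [hd, sum_range_succ, hDvan s le_rfl, add_zero]
    exact sum_mul_sum_eq_zero_of_multicomplex hDvan hDD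
  have hbg : g * (D 0 - d) = b := by rw [mul_sub, hb]
  have hnil : b ^ (Q + 1) = 0 := by
    refine pow_eq_zero_of_le_comap_succ (columnFiltration_le_comap_succ fun p => ?_)
      (columnFiltration_eq_top hinternal.submodule_iSup_eq_top fun p hp => hQ _ _ (.inl hp))
      (columnFiltration_eq_bot fun p hp => hQ _ _ (.inr (by omega)))
    rw [hb, hd, sum_range_succ', mul_add, sub_add_cancel_right, Submodule.comap_neg]
    exact le_comap_columnFiltration_succ hDdeg hgdeg s p
  rw [hPiE, hPi0, sub_sub]
  refine projection_identities_of_perturbation (T := ∑ j ∈ range (Q + 1), b ^ j) hgg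
    (by rwa [mul_assoc]) (by simpa using hDD 0) hdd ?_ ?_ (by rw [hPi, mul_assoc d]) rfl
  · rw [hbg, mul_neg_geom_sum, hnil, sub_zero]
  · rw [hbg, geom_sum_mul_neg, hnil, sub_zero]

/-- For an `s`-multicomplex with weights between `0` and `Q`, total differential `d`,
partial inverse `g` of `d₀`, `b := g∘d₀ − g∘d`,
`Π := (∑_{j=0}^{Q} b^j) ∘ g ∘ d + d ∘ (∑_{j=0}^{Q} b^j) ∘ g`, `Π_E := id − Π`, and
`Π₀ := id − g∘d₀ − d₀∘g`, the projection operators satisfy: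
(1) `g ∘ Π_E = 0` and `Π_E ∘ g = 0`;
(2) `d ∘ Π = Π ∘ d` and `d ∘ Π_E = Π_E ∘ d`;
(3) `Π₀ ∘ Π_E ∘ Π₀ = Π₀` and `Π_E ∘ Π₀ ∘ Π_E = Π_E`. -/
theorem projection_operators_identities
    {R M : Type*} [CommRing R] [AddCommGroup M] [Module R M]
    (Mgr : ℤ × ℤ → Submodule R M)
    (hinternal : DirectSum.IsInternal Mgr)
    (s : ℕ) (D : ℕ → M →ₗ[R] M)
    (hDvan : ∀ i : ℕ, s ≤ i → D i = 0)
    (hDdeg : ∀ (i : ℕ) (a b : ℤ), ∀ x ∈ Mgr (a, b), D i x ∈ Mgr (a + (i : ℤ), b + 1 - (i : ℤ)))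
    (hDD : ∀ n : ℕ, ∑ i ∈ Finset.range (n + 1), D i ∘ₗ D (n - i) = 0)
    (Q : ℕ) (hQ : ∀ a b : ℤ, a < 0 ∨ (Q : ℤ) < a → Mgr (a, b) = ⊥)
    (d : M →ₗ[R] M) (hd : d = ∑ i ∈ Finset.range (s + 1), D i)
    (g : M →ₗ[R] M)
    (hgdeg : ∀ (a b : ℤ), ∀ x ∈ Mgr (a, b), g x ∈ Mgr (a, b - 1))
    (hgg : g ∘ₗ g = 0)
    (hgdg : g ∘ₗ D 0 ∘ₗ g = g)
    (hdgd : D 0 ∘ₗ g ∘ₗ D 0 = D 0)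
    (b : M →ₗ[R] M) (hb : b = g ∘ₗ D 0 - g ∘ₗ d)
    (Pi : M →ₗ[R] M)
    (hPi : Pi = ((∑ j ∈ Finset.range (Q + 1), b ^ j) ∘ₗ g) ∘ₗ d
        + (d ∘ₗ (∑ j ∈ Finset.range (Q + 1), b ^ j)) ∘ₗ g)
    (PiE : M →ₗ[R] M) (hPiE : PiE = LinearMap.id - Pi)
    (Pi0 : M →ₗ[R] M) (hPi0 : Pi0 = LinearMap.id - g ∘ₗ D 0 - D 0 ∘ₗ g) :
    (g ∘ₗ PiE = 0 ∧ PiE ∘ₗ g = 0) ∧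
    (d ∘ₗ Pi = Pi ∘ₗ d ∧ d ∘ₗ PiE = PiE ∘ₗ d) ∧
    ((Pi0 ∘ₗ PiE) ∘ₗ Pi0 = Pi0 ∧ (PiE ∘ₗ Pi0) ∘ₗ PiE = PiE) :=
  projection_operators_identities_general Mgr hinternal s D hDvan hDdeg hDD Q hQ d hd g hgdeg hgg
    hgdg b hb Pi hPi PiE hPiE Pi0 hPi0
end

section
/- The Rumin differential d_c := Π_0 ∘ d ∘ Π_E ∘ Π_0 squares to zero: (Π_0 ∘ d ∘ Π_E ∘ Π_0) ∘ (Π_0 ∘ d ∘ Π_E ∘ Π_0) = 0. -/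
/-!
The element `b` strictly raises the first weight, which is bounded, so `b` is nilpotent and
`N := ∑ j ≤ Q, b ^ j` is a two-sided inverse of `1 - b`. With `h := N g` one has `Π = h d + d h`;
since `d² = 0`, `Π` commutes with `d`, and from `g d₀ g = g`, `d₀ g d₀ = d₀` one gets
`Π_E g = 0` and `d₀ g d Π_E = 0`. Finally `Π₀` is idempotent, and expanding the middle `Π₀` in
`d Π_E Π₀ d Π_E` leaves only terms containing `(d Π_E)² = d² Π_E²`, `Π_E g` or `d₀ g d Π_E`.
-/

open Finset Polynomial

theorem sum_mul_self_eq_zero_of_sum_antidiagonal {A : Type*} [Semiring A] (D : ℕ → A) (s : ℕ)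
    (hD : ∀ i, s ≤ i → D i = 0) (hDD : ∀ n, ∑ ij ∈ antidiagonal n, D ij.1 * D ij.2 = 0) :
    (∑ i ∈ range (s + 1), D i) * (∑ i ∈ range (s + 1), D i) = 0 := by
  -- Evaluate the square of `p = ∑ D i X ^ i` at the central element `1`.
  set p : A[X] := ∑ i ∈ range (s + 1), monomial i (D i)
  have hcoeff : ∀ n, p.coeff n = D n := by
    intro n
    simp only [p, finsetSum_coeff, coeff_monomial, sum_ite_eq', mem_range]
    split_ifs with h
    · rfl
    · exact (hD n (by omega)).symm
  have hpp : p * p = 0 := ext fun n => by simp [coeff_mul, hcoeff, hDD]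
  let ev := eval₂RingHom' (RingHom.id A) 1 fun _ => Commute.one_right _
  have hev : ev p = ∑ i ∈ range (s + 1), D i := by simp [ev, p]
  rw [← hev, ← map_mul, hpp, map_zero]

section WeightFiltration

variable {R M ι : Type*} [Semiring R] [AddCommMonoid M] [Module R M]
  (V : ι → Submodule R M) (w : ι → ℤ)

def weightFiltration (t : ℤ) : Submodule R M := ⨆ (i) (_ : t ≤ w i), V i

variable {V w}

theorem le_weightFiltration {i : ι} {t : ℤ} (h : t ≤ w i) : V i ≤ weightFiltration V w t :=
  le_iSup₂_of_le i h le_rfl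

theorem weightFiltration_antitone : Antitone (weightFiltration V w) := fun _ _ hts =>
  iSup₂_le fun _ hi => le_weightFiltration (hts.trans hi)

theorem map_pow_weightFiltration_le {f : M →ₗ[R] M}
    (hf : ∀ i, (V i).map f ≤ weightFiltration V w (w i + 1)) (k : ℕ) (t : ℤ) :
    (weightFiltration V w t).map (f ^ k) ≤ weightFiltration V w (t + k) := by
  induction k with
  | zero => rw [pow_zero, Module.End.one_eq_id, Submodule.map_id, Nat.cast_zero, add_zero]
  | succ k ih =>
    rw [pow_succ', Module.End.mul_eq_comp, Submodule.map_comp]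
    refine (Submodule.map_mono ih).trans ?_
    simp only [weightFiltration, Submodule.map_iSup]
    exact iSup₂_le fun i hi => (hf i).trans (weightFiltration_antitone (by push_cast; omega))

theorem pow_eq_zero_of_raises_weight (htop : ⨆ i, V i = ⊤) {Q : ℕ}
    (hbound : ∀ i, w i < 0 ∨ (Q : ℤ) < w i → V i = ⊥) {f : M →ₗ[R] M}
    (hf : ∀ i, (V i).map f ≤ weightFiltration V w (w i + 1)) : f ^ (Q + 1) = 0 := by
  have hzero : weightFiltration V w 0 = ⊤ := by
    refine top_le_iff.mp (htop ▸ iSup_le fun i => ?_)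
    by_cases hi : 0 ≤ w i
    · exact le_weightFiltration hi
    · simp [hbound i (.inl (by omega))]
  have hlast : weightFiltration V w (Q + 1) = ⊥ :=
    eq_bot_iff.mpr <| iSup₂_le fun i hi => (hbound i (.inr (by omega))).le
  have := map_pow_weightFiltration_le hf (Q + 1) 0
  rwa [hzero, zero_add, Nat.cast_succ, hlast, Submodule.map_top, le_bot_iff,
    LinearMap.range_eq_bot] at this

end WeightFiltration

theorem map_sub_le_weightFiltration_succ {R M : Type*} [Ring R] [AddCommGroup M] [Module R M]
    (Mgr : ℤ × ℤ → Submodule R M) (s : ℕ) (D : ℕ → M →ₗ[R] M)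
    (hDdeg : ∀ (i : ℕ) (a b : ℤ), ∀ x ∈ Mgr (a, b), D i x ∈ Mgr (a + (i : ℤ), b + 1 - (i : ℤ)))
    (g : M →ₗ[R] M) (hgdeg : ∀ (a b : ℤ), ∀ x ∈ Mgr (a, b), g x ∈ Mgr (a, b - 1)) (p : ℤ × ℤ) :
    (Mgr p).map (g ∘ₗ D 0 - g ∘ₗ ∑ i ∈ range (s + 1), D i)
      ≤ weightFiltration Mgr Prod.fst (p.1 + 1) := by
  rw [Submodule.map_le_iff_le_comap]
  intro x hx
  have hsplit : (g ∘ₗ D 0 - g ∘ₗ ∑ i ∈ range (s + 1), D i) x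
      = -∑ i ∈ range s, g (D (i + 1) x) := by
    simp only [LinearMap.sub_apply, LinearMap.comp_apply, sum_range_succ', LinearMap.add_apply,
      LinearMap.sum_apply, map_add, map_sum]
    abel
  rw [Submodule.mem_comap, hsplit]
  refine neg_mem (sum_mem fun i _ => le_weightFiltration ?_ (hgdeg _ _ _ (hDdeg (i + 1) _ _ x hx)))
  push_cast
  omega

section RuminAlgebra

/- `e`, `d` stand for `d₀` and the total differential; `N` is the inverse of `1 - b`, and
`N * g * d + d * N * g` is the operator `Π`. -/
variable {A : Type*} [Ring A] {d e g b N : A}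

theorem isIdempotentElem_one_sub_sub (hgg : g * g = 0) (hee : e * e = 0) (hgeg : g * e * g = g)
    (hege : e * g * e = e) : IsIdempotentElem (1 - g * e - e * g) := by
  have : (1 - g * e - e * g) * (1 - g * e - e * g) = 1 - 2 * (g * e) - 2 * (e * g)
      + g * e * g * e + g * (e * e) * g + e * (g * g) * e + e * g * e * g := by noncomm_ring
  rw [IsIdempotentElem, this, hgeg, hege, hee, hgg]
  noncomm_ring

theorem commute_mul_add_mul_of_mul_self_eq_zero (hdd : d * d = 0) (x : A) :
    Commute d (x * d + d * x) := by
  calc d * (x * d + d * x) = d * x * d + d * d * x := by noncomm_ring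
    _ = d * x * d + x * (d * d) := by rw [hdd, zero_mul, mul_zero]
    _ = (x * d + d * x) * d := by noncomm_ring

theorem homotopy_mul_eq_self (hgg : g * g = 0) (hgeg : g * e * g = g)
    (hb : b = g * e - g * d) (hN : N * (1 - b) = 1) : (N * g * d + d * N * g) * g = g := by
  have hgdg : g * d * g = (1 - b) * g := by
    rw [hb, sub_mul, sub_mul, hgeg]; noncomm_ring
  calc (N * g * d + d * N * g) * g = N * (g * d * g) + d * N * (g * g) := by noncomm_ring
    _ = g := by rw [hgdg, hgg, mul_zero, add_zero, ← mul_assoc, hN, one_mul]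

theorem mul_homotopy_eq_self (hdd : d * d = 0) (hege : e * g * e = e)
    (hb : b = g * e - g * d) (hN : (1 - b) * N = 1) :
    e * g * d * (N * g * d + d * N * g) = e * g * d := by
  have hegd : e * (1 - b) = e * g * d := by
    rw [hb, show e * (1 - (g * e - g * d)) = e - e * g * e + e * g * d by noncomm_ring, hege,
      sub_self, zero_add]
  calc e * g * d * (N * g * d + d * N * g)
        = e * g * d * N * (g * d) + e * g * (d * d) * N * g := by noncomm_ring
    _ = e * ((1 - b) * N) * (g * d) := by rw [hdd, ← hegd]; noncomm_ring
    _ = e * g * d := by rw [hN]; noncomm_ring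

theorem rumin_sq_eq_zero {P0 E : A} (hdd : d * d = 0) (hee : e * e = 0) (hgg : g * g = 0)
    (hgeg : g * e * g = g) (hege : e * g * e = e) (hb : b = g * e - g * d)
    (hNl : N * (1 - b) = 1) (hNr : (1 - b) * N = 1) (hE : E = 1 - (N * g * d + d * N * g))
    (hP0 : P0 = 1 - g * e - e * g) : P0 * d * E * P0 * (P0 * d * E * P0) = 0 := by
  have hEg : E * g = 0 := by
    rw [hE, sub_mul, one_mul, homotopy_mul_eq_self hgg hgeg hb hNl, sub_self]
  have hegdE : e * g * d * E = 0 := by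
    rw [hE, mul_sub, mul_one, mul_homotopy_eq_self hdd hege hb hNr, sub_self]
  have hEd : Commute E d := by
    have := commute_mul_add_mul_of_mul_self_eq_zero hdd (N * g)
    rw [← mul_assoc] at this
    exact hE ▸ (Commute.one_left d).sub_left this.symm
  have hdEdE : d * E * (d * E) = 0 :=
    calc d * E * (d * E) = d * (E * d) * E := by noncomm_ring
      _ = 0 := by rw [hEd.eq, ← mul_assoc, hdd]; noncomm_ring
  have hdEP0dE : d * E * P0 * (d * E) = 0 :=
    calc d * E * P0 * (d * E)
        = d * E * (d * E) - d * (E * g) * (e * d * E) - d * E * (e * g * d * E) := by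
          rw [hP0]; noncomm_ring
      _ = 0 := by rw [hdEdE, hEg, hegdE]; noncomm_ring
  have hP0idem : IsIdempotentElem P0 := hP0 ▸ isIdempotentElem_one_sub_sub hgg hee hgeg hege
  calc P0 * d * E * P0 * (P0 * d * E * P0) = P0 * (d * E * (P0 * P0) * (d * E)) * P0 := by
        noncomm_ring
    _ = 0 := by rw [hP0idem.eq, hdEP0dE, mul_zero, zero_mul]

end RuminAlgebra

/-- For an `s`-multicomplex with weights between `0` and `Q`, total differential `d`,
partial inverse `g` of `d₀`, `b := g∘d₀ − g∘d`,
`Π := (∑_{j=0}^{Q} b^j) ∘ g ∘ d + d ∘ (∑_{j=0}^{Q} b^j) ∘ g`, `Π_E := id − Π`, and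
`Π₀ := id − g∘d₀ − d₀∘g`, the Rumin differential `d_c := Π₀ ∘ d ∘ Π_E ∘ Π₀` squares
to zero. -/
theorem rumin_differential_squares_to_zero
    {R M : Type*} [CommRing R] [AddCommGroup M] [Module R M]
    (Mgr : ℤ × ℤ → Submodule R M)
    (hinternal : DirectSum.IsInternal Mgr)
    (s : ℕ) (D : ℕ → M →ₗ[R] M)
    (hDvan : ∀ i : ℕ, s ≤ i → D i = 0)
    (hDdeg : ∀ (i : ℕ) (a b : ℤ), ∀ x ∈ Mgr (a, b), D i x ∈ Mgr (a + (i : ℤ), b + 1 - (i : ℤ)))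
    (hDD : ∀ n : ℕ, ∑ i ∈ Finset.range (n + 1), D i ∘ₗ D (n - i) = 0)
    (Q : ℕ) (hQ : ∀ a b : ℤ, a < 0 ∨ (Q : ℤ) < a → Mgr (a, b) = ⊥)
    (d : M →ₗ[R] M) (hd : d = ∑ i ∈ Finset.range (s + 1), D i)
    (g : M →ₗ[R] M)
    (hgdeg : ∀ (a b : ℤ), ∀ x ∈ Mgr (a, b), g x ∈ Mgr (a, b - 1))
    (hgg : g ∘ₗ g = 0)
    (hgdg : g ∘ₗ D 0 ∘ₗ g = g)
    (hdgd : D 0 ∘ₗ g ∘ₗ D 0 = D 0)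
    (b : M →ₗ[R] M) (hb : b = g ∘ₗ D 0 - g ∘ₗ d)
    (Pi : M →ₗ[R] M)
    (hPi : Pi = ((∑ j ∈ Finset.range (Q + 1), b ^ j) ∘ₗ g) ∘ₗ d
        + (d ∘ₗ (∑ j ∈ Finset.range (Q + 1), b ^ j)) ∘ₗ g)
    (PiE : M →ₗ[R] M) (hPiE : PiE = LinearMap.id - Pi)
    (Pi0 : M →ₗ[R] M) (hPi0 : Pi0 = LinearMap.id - g ∘ₗ D 0 - D 0 ∘ₗ g) :
    (((Pi0 ∘ₗ d) ∘ₗ PiE) ∘ₗ Pi0) ∘ₗ (((Pi0 ∘ₗ d) ∘ₗ PiE) ∘ₗ Pi0) = 0 := by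
  have hdd : d * d = 0 := hd ▸ sum_mul_self_eq_zero_of_sum_antidiagonal D s hDvan fun n => by
    rw [Nat.sum_antidiagonal_eq_sum_range_succ (fun i j => D i * D j)]
    exact hDD n
  have hee : D 0 * D 0 = 0 := by simpa [Module.End.mul_eq_comp] using hDD 0
  have hbQ : b ^ (Q + 1) = 0 :=
    pow_eq_zero_of_raises_weight hinternal.submodule_iSup_eq_top (fun p => hQ p.1 p.2)
      (hb ▸ hd ▸ map_sub_le_weightFiltration_succ Mgr s D hDdeg g hgdeg)
  exact rumin_sq_eq_zero (A := Module.End R M) hdd hee hgg (mul_assoc g _ _ ▸ hgdg)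
    (mul_assoc (D 0) _ _ ▸ hdgd) hb (by rw [geom_sum_mul_neg, hbQ, sub_zero])
    (by rw [mul_neg_geom_sum, hbQ, sub_zero]) (hPiE.trans (congrArg _ hPi)) hPi0
end

section
/- For every x ∈ M with d_0 x = 0, one has d_0(∂_1 x) = 0, and for every r ≥ 2: d_0(∂_r x) = −∑_{i=1}^{r−1} d_i((∂_{r−i} − d_0 ∘ g ∘ ∂_{r−i}) x). -/
/-- Let `d_i` be linear endomorphisms with `d_i = 0` for `i ≥ s` and
`∑_{i+j=n} d_i ∘ d_j = 0` for every `n`, let `g` be an arbitrary linear map, and define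
`∂₁ := d₁` and `∂_r := d_r − ∑_{j=1}^{r−1} d_{r−j} ∘ g ∘ ∂_j` for `r ≥ 2`.  Then for every
`x` with `d₀ x = 0`, one has `d₀(∂₁ x) = 0`, and for every `r ≥ 2`:
`d₀(∂_r x) = −∑_{i=1}^{r−1} d_i((∂_{r−i} − d₀ ∘ g ∘ ∂_{r−i}) x)`. -/
theorem d0_of_partial_r
    {R M : Type*} [CommRing R] [AddCommGroup M] [Module R M]
    (s : ℕ) (D : ℕ → M →ₗ[R] M)
    (hDvan : ∀ i : ℕ, s ≤ i → D i = 0)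
    (hDD : ∀ n : ℕ, ∑ i ∈ Finset.range (n + 1), D i ∘ₗ D (n - i) = 0)
    (g : M →ₗ[R] M)
    (P : ℕ → M →ₗ[R] M) (hP1 : P 1 = D 1)
    (hPrec : ∀ r : ℕ, 2 ≤ r → P r = D r - ∑ j ∈ Finset.Ico 1 r, D (r - j) ∘ₗ (g ∘ₗ P j))
    (x : M) (hx : D 0 x = 0) :
    D 0 (P 1 x) = 0 ∧
    ∀ r : ℕ, 2 ≤ r →
      D 0 (P r x) = -∑ i ∈ Finset.Ico 1 r, D i (P (r - i) x - D 0 (g (P (r - i) x))) := by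
  -- key: D 0 (D n y) = -∑_{i=1}^{n} D i (D (n-i) y)
  have key : ∀ (n : ℕ) (y : M),
      D 0 (D n y) = -∑ i ∈ Finset.Ico 1 (n + 1), D i (D (n - i) y) := by
    intro n y
    have h := congrArg (fun f : M →ₗ[R] M => f y) (hDD n)
    simp only [LinearMap.coe_sum, Finset.sum_apply, LinearMap.comp_apply,
      LinearMap.zero_apply] at h
    rw [Finset.sum_range_succ'] at h
    simp only [Nat.sub_zero] at h
    rw [Finset.sum_Ico_eq_sum_range]
    have e : ∑ i ∈ Finset.range (n + 1 - 1), D (1 + i) (D (n - (1 + i)) y)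
        = ∑ k ∈ Finset.range n, D (k + 1) (D (n - (k + 1)) y) := by
      apply Finset.sum_congr (by simp)
      intro k _
      rw [Nat.add_comm 1 k]
    rw [e, eq_neg_iff_add_eq_zero, add_comm]
    exact h
  constructor
  · rw [hP1, key 1 x]
    rw [Finset.sum_Ico_eq_sum_range]
    simp [hx]
  · intro r hr
    have hr1 : 1 ≤ r := by omega
    set y : ℕ → M := fun j => g (P j x) with hy
    have hPapp : ∀ m : ℕ, 1 ≤ m →
        P m x = D m x - ∑ j ∈ Finset.Ico 1 m, D (m - j) (y j) := by
      intro m hm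
      rcases eq_or_lt_of_le hm with h1 | h2
      · rw [← h1, hP1]; simp
      · rw [hPrec m h2]
        simp [hy]
    -- LHS expansion
    have hL : D 0 (P r x)
        = D 0 (D r x) - ∑ j ∈ Finset.Ico 1 r, D 0 (D (r - j) (y j)) := by
      rw [hPapp r hr1, map_sub, map_sum]
    have h1 : D 0 (D r x) = -∑ i ∈ Finset.Ico 1 r, D i (D (r - i) x) := by
      rw [key r x, Finset.sum_Ico_succ_top hr1, Nat.sub_self, hx, map_zero, add_zero]
    have h2 : ∀ j ∈ Finset.Ico 1 r,
        D 0 (D (r - j) (y j))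
          = -∑ i ∈ Finset.Ico 1 (r - j), D i (D (r - j - i) (y j))
            - D (r - j) (D 0 (y j)) := by
      intro j hj
      simp only [Finset.mem_Ico] at hj
      have hrj : 1 ≤ r - j := by omega
      rw [key (r - j) (y j), Finset.sum_Ico_succ_top hrj, Nat.sub_self]
      abel
    -- RHS expansion
    have h3 : ∀ i ∈ Finset.Ico 1 r,
        D i (P (r - i) x - D 0 (y (r - i)))
          = D i (D (r - i) x)
            - ∑ j ∈ Finset.Ico 1 (r - i), D i (D (r - i - j) (y j))
            - D i (D 0 (y (r - i))) := by
      intro i hi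
      simp only [Finset.mem_Ico] at hi
      rw [map_sub, hPapp (r - i) (by omega), map_sub, map_sum]
    rw [hL, h1, Finset.sum_congr rfl h2, Finset.sum_congr rfl h3]
    -- swap the double sum
    have hswap : ∑ j ∈ Finset.Ico 1 r, ∑ i ∈ Finset.Ico 1 (r - j),
          D i (D (r - j - i) (y j))
        = ∑ i ∈ Finset.Ico 1 r, ∑ j ∈ Finset.Ico 1 (r - i),
          D i (D (r - i - j) (y j)) := by
      rw [Finset.sum_comm' (s := Finset.Ico 1 r) (t := fun j => Finset.Ico 1 (r - j))
        (t' := Finset.Ico 1 r) (s' := fun i => Finset.Ico 1 (r - i))]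
      · apply Finset.sum_congr rfl
        intro i _
        apply Finset.sum_congr rfl
        intro j _
        have e : r - j - i = r - i - j := Nat.sub_right_comm r j i
        rw [e]
      · intro j i
        simp only [Finset.mem_Ico]
        omega
    -- reflect the simple sum
    have hrefl : ∑ j ∈ Finset.Ico 1 r, D (r - j) (D 0 (y j))
        = ∑ i ∈ Finset.Ico 1 r, D i (D 0 (y (r - i))) := by
      apply Finset.sum_nbij' (fun j => r - j) (fun i => r - i)
      · intro a ha; simp only [Finset.mem_Ico] at *; omega
      · intro a ha; simp only [Finset.mem_Ico] at *; omega
      · intro a ha; simp only [Finset.mem_Ico] at *; omega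
      · intro a ha; simp only [Finset.mem_Ico] at *; omega
      · intro a ha
        simp only [Finset.mem_Ico] at ha
        have e : r - (r - a) = a := by omega
        rw [e]
    simp only [Finset.sum_sub_distrib, Finset.sum_neg_distrib]
    rw [hswap, hrefl]
    abel
end

section
/- Let T_1, …, T_m and U_1, …, U_{m'} be continuous linear maps H → H such that T_i ∘ S = c_i · (S ∘ T_i*) for nonzero reals c_i and U_j ∘ S = e_j · (S ∘ U_j*) for nonzero reals e_j (adjoints taken in H). Then S maps the subspace (⋂_{i=1}^{m} ker T_i) ∩ (∑_{j=1}^{m'} closure(Im U_j))^⊥ onto the subspace (⋂_{j=1}^{m'} ker U_j) ∩ (∑_{i=1}^{m} closure(Im T_i))^⊥. (This is the abstract form of the statement that the collection of spectral complexes, given by the subspaces Z_{r_1} ∩ (B_{r_2})^⊥, is closed under Hodge-star duality: ⋆[Z_{r_1} ∩ (B_{r_2})^⊥] = Z_{r_2} ∩ (B_{r_1})^⊥.) -/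
/-!
Taking adjoints in `A ∘ S = c • S ∘ A†` and using `S† = S⁻¹` gives `A† ∘ S = c • S ∘ A`.
Hence `S` carries `ker A†` onto `ker A` and `ker A` onto `ker A†`. Since
`(∑ⱼ closure (Im Uⱼ))ᗮ = ⋂ⱼ ker Uⱼ†`, both sides of the theorem are intersections of kernels,
and `S` exchanges them term by term.
-/

open ContinuousLinearMap

theorem apply_map_eq_zero_iff_of_apply_map_eq {E : Type*} [NormedAddCommGroup E]
    [NormedSpace ℝ E] {S : E ≃ₗᵢ[ℝ] E} {A B : E →L[ℝ] E} {c : ℝ}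
    (hc : c ≠ 0) (h : ∀ x, A (S x) = c • S (B x)) (x : E) : A (S x) = 0 ↔ B x = 0 := by
  rw [h, smul_eq_zero, LinearIsometryEquiv.map_eq_zero_iff]
  simp [hc]

section

variable {H : Type*} [NormedAddCommGroup H] [InnerProductSpace ℝ H] [CompleteSpace H]

theorem adjoint_apply_map_eq_of_apply_map_eq {S : H ≃ₗᵢ[ℝ] H} {A : H →L[ℝ] H} {c : ℝ}
    (h : ∀ x, A (S x) = c • S (adjoint A x)) (y : H) : adjoint A (S y) = c • S (A y) := by
  refine ext_inner_right ℝ fun z ↦ ?_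
  obtain ⟨w, rfl⟩ := S.surjective z
  calc inner ℝ (adjoint A (S y)) (S w)
      = inner ℝ (S y) (A (S w)) := adjoint_inner_left A (S w) (S y)
    _ = c * inner ℝ y (adjoint A w) := by
        rw [h, real_inner_smul_right, LinearIsometryEquiv.inner_map_map]
    _ = c * inner ℝ (A y) w := by rw [adjoint_inner_right]
    _ = inner ℝ (c • S (A y)) (S w) := by
        rw [real_inner_smul_left, LinearIsometryEquiv.inner_map_map]

theorem orthogonal_iSup_closure_range {ι : Type*} (U : ι → H →L[ℝ] H) :
    (⨆ j, (LinearMap.range (U j : H →ₗ[ℝ] H)).topologicalClosure)ᗮ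
      = ⨅ j, LinearMap.ker (adjoint (U j) : H →ₗ[ℝ] H) := by
  rw [← Submodule.iInf_orthogonal]
  simp only [Submodule.orthogonal_closure]
  exact congr_arg iInf (funext fun j ↦ orthogonal_range (U j))

noncomputable def spectralComplex {ι κ : Type*} (T : ι → H →L[ℝ] H) (U : κ → H →L[ℝ] H) :
    Submodule ℝ H :=
  (⨅ i, LinearMap.ker (T i : H →ₗ[ℝ] H))
    ⊓ (⨆ j, (LinearMap.range (U j : H →ₗ[ℝ] H)).topologicalClosure)ᗮ

theorem mem_spectralComplex {ι κ : Type*} {T : ι → H →L[ℝ] H} {U : κ → H →L[ℝ] H} {x : H} :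
    x ∈ spectralComplex T U ↔ (∀ i, T i x = 0) ∧ ∀ j, adjoint (U j) x = 0 := by
  simp [spectralComplex, orthogonal_iSup_closure_range, Submodule.mem_iInf]

theorem map_mem_spectralComplex_iff {ι κ : Type*} {S : H ≃ₗᵢ[ℝ] H}
    {T : ι → H →L[ℝ] H} {U : κ → H →L[ℝ] H} {c : ι → ℝ} {e : κ → ℝ}
    (hc : ∀ i, c i ≠ 0) (he : ∀ j, e j ≠ 0)
    (hT : ∀ i x, T i (S x) = c i • S (adjoint (T i) x))
    (hU : ∀ j x, U j (S x) = e j • S (adjoint (U j) x)) (x : H) :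
    S x ∈ spectralComplex U T ↔ x ∈ spectralComplex T U := by
  have hT' : ∀ i x, adjoint (T i) (S x) = c i • S (T i x) :=
    fun i ↦ adjoint_apply_map_eq_of_apply_map_eq (hT i)
  simp only [mem_spectralComplex, apply_map_eq_zero_iff_of_apply_map_eq (he _) (hU _),
    apply_map_eq_zero_iff_of_apply_map_eq (hc _) (hT' _)]
  exact and_comm

end

theorem hodge_star_spectral_complexes_general
    {H : Type*} [NormedAddCommGroup H] [InnerProductSpace ℝ H] [CompleteSpace H]
    (S : H ≃ₗᵢ[ℝ] H)
    (m m' : ℕ) (T : Fin m → H →L[ℝ] H) (U : Fin m' → H →L[ℝ] H)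
    (c : Fin m → ℝ) (e : Fin m' → ℝ)
    (hc : ∀ i, c i ≠ 0) (he : ∀ j, e j ≠ 0)
    (hT : ∀ (i : Fin m) (x : H), T i (S x) = c i • S (ContinuousLinearMap.adjoint (T i) x))
    (hU : ∀ (j : Fin m') (x : H), U j (S x) = e j • S (ContinuousLinearMap.adjoint (U j) x)) :
    ⇑S '' (((⨅ i, LinearMap.ker (T i : H →ₗ[ℝ] H))
        ⊓ (⨆ j, (LinearMap.range (U j : H →ₗ[ℝ] H)).topologicalClosure)ᗮ : Submodule ℝ H) : Set H)
      = (((⨅ j, LinearMap.ker (U j : H →ₗ[ℝ] H))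
        ⊓ (⨆ i, (LinearMap.range (T i : H →ₗ[ℝ] H)).topologicalClosure)ᗮ : Submodule ℝ H) : Set H) := by
  change S '' (spectralComplex T U : Set H) = spectralComplex U T
  have hpre : (spectralComplex T U : Set H) = S ⁻¹' spectralComplex U T :=
    Set.ext fun x ↦ (map_mem_spectralComplex_iff hc he hT hU x).symm
  rw [hpre, Set.image_preimage_eq _ S.surjective]

/-- Abstract form of the statement that the collection of spectral complexes
`Z_{r₁} ∩ (B_{r₂})ᗮ` is closed under Hodge-star duality.  Let `S` be a linear isometric
bijection of a real Hilbert space with `S ∘ S = ε • id`, `ε ∈ {1, −1}`.  If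
`Tᵢ ∘ S = cᵢ • (S ∘ Tᵢ*)` and `Uⱼ ∘ S = eⱼ • (S ∘ Uⱼ*)` for nonzero reals `cᵢ, eⱼ`, then
`S` maps `(⋂ᵢ ker Tᵢ) ∩ (∑ⱼ closure (Im Uⱼ))ᗮ` onto `(⋂ⱼ ker Uⱼ) ∩ (∑ᵢ closure (Im Tᵢ))ᗮ`. -/
theorem hodge_star_spectral_complexes
    {H : Type*} [NormedAddCommGroup H] [InnerProductSpace ℝ H] [CompleteSpace H]
    (S : H ≃ₗᵢ[ℝ] H) (ε : ℝ) (hε : ε = 1 ∨ ε = -1)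
    (hSS : ∀ x : H, S (S x) = ε • x)
    (m m' : ℕ) (T : Fin m → H →L[ℝ] H) (U : Fin m' → H →L[ℝ] H)
    (c : Fin m → ℝ) (e : Fin m' → ℝ)
    (hc : ∀ i, c i ≠ 0) (he : ∀ j, e j ≠ 0)
    (hT : ∀ (i : Fin m) (x : H), T i (S x) = c i • S (ContinuousLinearMap.adjoint (T i) x))
    (hU : ∀ (j : Fin m') (x : H), U j (S x) = e j • S (ContinuousLinearMap.adjoint (U j) x)) :
    ⇑S '' (((⨅ i, LinearMap.ker (T i : H →ₗ[ℝ] H))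
        ⊓ (⨆ j, (LinearMap.range (U j : H →ₗ[ℝ] H)).topologicalClosure)ᗮ : Submodule ℝ H) : Set H)
      = (((⨅ j, LinearMap.ker (U j : H →ₗ[ℝ] H))
        ⊓ (⨆ i, (LinearMap.range (T i : H →ₗ[ℝ] H)).topologicalClosure)ᗮ : Submodule ℝ H) : Set H) :=
  hodge_star_spectral_complexes_general S m m' T U c e hc he hT hU
end
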